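/- arXiv:1010.2467 — 7 statements merged into one kernel-verified Lean document; each statement's English description precedes it below -/
import Mathlib

section
/- For every graph G on n vertices, γ(G) ≤ α(G) ≤ Γ_d(G) ≤ n − α'(G), where γ is the domination number, α the independence number, α' the matching number, and Γ_d(G) is the maximum over all orientations D of G of the directed domination number γ(D). -/
/-- An orientation of a simple graph `G`: each edge gets exactly one direction. -/
structure GraphOrientation {V : Type*} (G : SimpleGraph V) where
  rel : V → V → Prop
  adj_of_rel : ∀ u v, rel u v → G.Adj u v
  rel_of_adj : ∀ u v, G.Adj u v → rel u v ∨ rel v u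
  asymm : ∀ u v, rel u v → ¬ rel v u

/-- `S` is a directed dominating set for the digraph relation `D`. -/
def IsDirDomSet {V : Type*} (D : V → V → Prop) (S : Set V) : Prop :=
  ∀ u, u ∉ S → ∃ v ∈ S, D v u

/-- The directed domination number of a digraph. -/
noncomputable def dirDomNum (V : Type*) [Fintype V] (D : V → V → Prop) : ℕ :=
  sInf {k | ∃ S : Finset V, IsDirDomSet D ↑S ∧ S.card = k}

/-- The directed domination number of a graph: max of `dirDomNum` over orientations. -/
noncomputable def GammaD {V : Type*} [Fintype V] (G : SimpleGraph V) : ℕ :=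
  sSup {k | ∃ D : GraphOrientation G, dirDomNum V D.rel = k}

/-- `S` is an independent set of vertices in `G`. -/
def IsIndepFinset {V : Type*} (G : SimpleGraph V) (S : Finset V) : Prop :=
  ∀ u ∈ S, ∀ v ∈ S, ¬ G.Adj u v

/-- The independence number of `G`. -/
noncomputable def alphaNum {V : Type*} [Fintype V] (G : SimpleGraph V) : ℕ :=
  sSup {k | ∃ S : Finset V, IsIndepFinset G S ∧ S.card = k}

/-- `S` is a (undirected) dominating set of `G`. -/
def IsDomSet {V : Type*} (G : SimpleGraph V) (S : Finset V) : Prop :=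
  ∀ u, u ∉ S → ∃ v ∈ S, G.Adj v u

/-- The domination number of `G`. -/
noncomputable def domNum {V : Type*} [Fintype V] (G : SimpleGraph V) : ℕ :=
  sInf {k | ∃ S : Finset V, IsDomSet G S ∧ S.card = k}

/-- The matching number of `G`. -/
noncomputable def matchNum {V : Type*} [Fintype V] (G : SimpleGraph V) : ℕ :=
  sSup {k | ∃ M : Finset (Sym2 V), ↑M ⊆ G.edgeSet ∧
    (∀ e ∈ M, ∀ f ∈ M, e ≠ f → ∀ v, v ∈ e → v ∉ f) ∧ M.card = k}

section Aux
variable {V : Type*} [Fintype V] (G : SimpleGraph V)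

lemma alpha_spec : ∃ S : Finset V, IsIndepFinset G S ∧ S.card = alphaNum G ∧
    ∀ T : Finset V, IsIndepFinset G T → T.card ≤ alphaNum G := by
  classical
  have hbdd : BddAbove {k | ∃ S : Finset V, IsIndepFinset G S ∧ S.card = k} :=
    ⟨Fintype.card V, by rintro k ⟨S, -, rfl⟩; exact S.card_le_univ⟩
  have hne : {k | ∃ S : Finset V, IsIndepFinset G S ∧ S.card = k}.Nonempty :=
    ⟨0, ∅, by simp [IsIndepFinset], rfl⟩
  obtain ⟨S, hS, hcard⟩ := Nat.sSup_mem hne hbdd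
  exact ⟨S, hS, hcard, fun T hT => le_csSup hbdd ⟨T, hT, rfl⟩⟩

lemma dom_le_alpha : domNum G ≤ alphaNum G := by
  classical
  obtain ⟨A, hA, hcard, hmax⟩ := alpha_spec G
  have hdom : IsDomSet G A := by
    intro u hu
    by_contra h
    push_neg at h
    have hins : IsIndepFinset G (insert u A) := by
      intro x hx y hy hadj
      rcases Finset.mem_insert.1 hx with hxu | hxA
      · rcases Finset.mem_insert.1 hy with hyu | hyA
        · rw [hxu, hyu] at hadj; exact G.irrefl hadj
        · rw [hxu] at hadj; exact h y hyA (G.adj_symm hadj)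
      · rcases Finset.mem_insert.1 hy with hyu | hyA
        · rw [hyu] at hadj; exact h x hxA hadj
        · exact hA x hxA y hyA hadj
    have := hmax _ hins
    rw [Finset.card_insert_of_notMem hu, hcard] at this
    omega
  calc domNum G ≤ A.card := Nat.sInf_le ⟨A, hdom, rfl⟩
    _ = alphaNum G := hcard

lemma alpha_le_gamma : alphaNum G ≤ GammaD G := by
  classical
  obtain ⟨A, hA, hcard, -⟩ := alpha_spec G
  set r := WellOrderingRel (α := V) with hr
  have htri : ∀ a b : V, a ≠ b → r a b ∨ r b a := fun a b hab => by
    rcases trichotomous_of r a b with h | h | h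
    · exact Or.inl h
    · exact absurd h hab
    · exact Or.inr h
  have hasy : ∀ a b : V, r a b → ¬ r b a := fun a b h1 h2 =>
    irrefl_of r a (trans_of r h1 h2)
  let D : GraphOrientation G := {
    rel := fun u v => G.Adj u v ∧ (u ∈ A ∨ (v ∉ A ∧ r u v))
    adj_of_rel := fun u v h => h.1
    rel_of_adj := by
      intro u v hadj
      by_cases hu : u ∈ A
      · exact Or.inl ⟨hadj, Or.inl hu⟩
      by_cases hv : v ∈ A
      · exact Or.inr ⟨hadj.symm, Or.inl hv⟩
      rcases htri u v hadj.ne with h | h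
      · exact Or.inl ⟨hadj, Or.inr ⟨hv, h⟩⟩
      · exact Or.inr ⟨hadj.symm, Or.inr ⟨hu, h⟩⟩
    asymm := by
      rintro u v ⟨hadj, h1⟩ ⟨-, h2⟩
      rcases h1 with hu | ⟨hv, hr1⟩
      · rcases h2 with hv | ⟨hu', -⟩
        · exact hA u hu v hv hadj
        · exact hu' hu
      · rcases h2 with hv' | ⟨-, hr2⟩
        · exact hv hv'
        · exact hasy u v hr1 hr2 }
  have huniv : ∀ (D' : V → V → Prop), IsDirDomSet D' ↑(Finset.univ : Finset V) :=
    fun D' u hu => (hu (Finset.mem_coe.2 (Finset.mem_univ u))).elim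
  have hne : {k | ∃ S : Finset V, IsDirDomSet D.rel ↑S ∧ S.card = k}.Nonempty :=
    ⟨(Finset.univ : Finset V).card, Finset.univ, huniv _, rfl⟩
  have hlow : A.card ≤ dirDomNum V D.rel := by
    have hmem := Nat.sInf_mem hne
    obtain ⟨S, hS, hSc⟩ := hmem
    rw [dirDomNum, ← hSc]
    refine Finset.card_le_card ?_
    intro a ha
    by_contra haS
    obtain ⟨v, hvS, hrel⟩ := hS a (fun h => haS (Finset.mem_coe.1 h))
    rcases hrel.2 with hv | ⟨haA, -⟩
    · exact hA v hv a ha hrel.1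
    · exact haA ha
  have hbdd : BddAbove {k | ∃ D' : GraphOrientation G, dirDomNum V D'.rel = k} := by
    refine ⟨Fintype.card V, ?_⟩
    rintro k ⟨D', rfl⟩
    calc dirDomNum V D'.rel ≤ (Finset.univ : Finset V).card :=
          Nat.sInf_le ⟨Finset.univ, huniv _, rfl⟩
      _ = Fintype.card V := Finset.card_univ
  calc alphaNum G = A.card := hcard.symm
    _ ≤ dirDomNum V D.rel := hlow
    _ ≤ GammaD G := le_csSup hbdd ⟨D, rfl⟩

lemma gamma_le_match : GammaD G ≤ Fintype.card V - matchNum G := by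
  classical
  have hbddM : BddAbove {k | ∃ M : Finset (Sym2 V), ↑M ⊆ G.edgeSet ∧
      (∀ e ∈ M, ∀ f ∈ M, e ≠ f → ∀ v, v ∈ e → v ∉ f) ∧ M.card = k} :=
    ⟨Fintype.card (Sym2 V), by rintro k ⟨M, -, -, rfl⟩; exact M.card_le_univ⟩
  have hneM : {k | ∃ M : Finset (Sym2 V), ↑M ⊆ G.edgeSet ∧
      (∀ e ∈ M, ∀ f ∈ M, e ≠ f → ∀ v, v ∈ e → v ∉ f) ∧ M.card = k}.Nonempty :=
    ⟨0, ∅, by simp, by simp, rfl⟩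
  obtain ⟨M, hMsub, hMdisj, hMcard⟩ := Nat.sSup_mem hneM hbddM
  have hMcard' : M.card = matchNum G := hMcard
  rw [GammaD]
  refine csSup_le' ?_
  rintro k ⟨D, rfl⟩
  have hchoice : ∀ e ∈ M, ∃ p : V × V, e = s(p.1, p.2) ∧ D.rel p.1 p.2 := by
    intro e
    induction e using Sym2.ind with
    | _ u v =>
      intro he
      have hadj : G.Adj u v := (G.mem_edgeSet).1 (hMsub (Finset.mem_coe.2 he))
      rcases D.rel_of_adj u v hadj with h | h
      · exact ⟨(u, v), rfl, h⟩
      · exact ⟨(v, u), Sym2.eq_swap, h⟩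
  set hd : (e : Sym2 V) → e ∈ M → V := fun e he => (Classical.choose (hchoice e he)).2 with hhd
  set tl : (e : Sym2 V) → e ∈ M → V := fun e he => (Classical.choose (hchoice e he)).1 with htl
  have hspec : ∀ e (he : e ∈ M), e = s(tl e he, hd e he) ∧ D.rel (tl e he) (hd e he) :=
    fun e he => Classical.choose_spec (hchoice e he)
  have hd_mem : ∀ e (he : e ∈ M), hd e he ∈ e := by
    intro e he
    obtain ⟨h1, -⟩ := hspec e he
    set x := hd e he with hx
    set y := tl e he with hy
    rw [h1]
    exact Sym2.mem_mk_right _ _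
  have tl_mem : ∀ e (he : e ∈ M), tl e he ∈ e := by
    intro e he
    obtain ⟨h1, -⟩ := hspec e he
    set x := hd e he with hx
    set y := tl e he with hy
    rw [h1]
    exact Sym2.mem_mk_left _ _
  set H : Finset V := M.attach.image (fun e => hd e.1 e.2) with hH
  have hHcard : H.card = M.card := by
    rw [hH, Finset.card_image_of_injOn, Finset.card_attach]
    intro e1 h1 e2 h2 heq
    by_contra hne
    have hne' : e1.1 ≠ e2.1 := fun h => hne (Subtype.ext h)
    have heq' : hd e1.1 e1.2 = hd e2.1 e2.2 := heq
    have hm2 := hd_mem e2.1 e2.2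
    rw [← heq'] at hm2
    exact hMdisj e1.1 e1.2 e2.1 e2.2 hne' _ (hd_mem e1.1 e1.2) hm2
  have hdom : IsDirDomSet D.rel ↑(Finset.univ \ H) := by
    intro u hu
    have huH : u ∈ H := by
      by_contra h
      exact hu (Finset.mem_coe.2 (Finset.mem_sdiff.2 ⟨Finset.mem_univ u, h⟩))
    rw [hH] at huH
    obtain ⟨e, he, heq0⟩ := Finset.mem_image.1 huH
    have heq : hd e.1 e.2 = u := heq0
    refine ⟨tl e.1 e.2, ?_, ?_⟩
    · refine Finset.mem_coe.2 (Finset.mem_sdiff.2 ⟨Finset.mem_univ _, ?_⟩)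
      intro htlH
      rw [hH] at htlH
      obtain ⟨e', -, heq0'⟩ := Finset.mem_image.1 htlH
      have heq' : hd e'.1 e'.2 = tl e.1 e.2 := heq0'
      by_cases hee : e' = e
      · subst hee
        have hrel := (hspec e'.1 e'.2).2
        rw [heq'] at hrel
        exact D.asymm _ _ hrel hrel
      · have h1 : tl e.1 e.2 ∈ e'.1 := by rw [← heq'] ; exact hd_mem e'.1 e'.2
        exact hMdisj e'.1 e'.2 e.1 e.2 (fun h => hee (Subtype.ext h)) _ h1 (tl_mem e.1 e.2)
    · rw [← heq]; exact (hspec e.1 e.2).2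
  have hScard : (Finset.univ \ H).card = Fintype.card V - matchNum G := by
    rw [Finset.card_sdiff_of_subset (Finset.subset_univ H), Finset.card_univ, hHcard, hMcard']
  exact le_trans (Nat.sInf_le ⟨Finset.univ \ H, hdom, rfl⟩) (le_of_eq hScard)

end Aux

/-- `γ(G) ≤ α(G) ≤ Γ_d(G) ≤ n − α'(G)`. -/
theorem stmt_1 {V : Type*} [Fintype V] (G : SimpleGraph V) :
    domNum G ≤ alphaNum G ∧ alphaNum G ≤ GammaD G ∧
      GammaD G ≤ Fintype.card V - matchNum G := by
  exact ⟨dom_le_alpha G, alpha_le_gamma G, gamma_le_match G⟩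
end

section
/- Caro-Wei bound: For every graph H, the independence number satisfies α(H) ≥ Σ_{v ∈ V(H)} 1/(d_H(v) + 1), and consequently α(H) ≥ n_H / (d_av(H) + 1) where n_H is the order and d_av(H) the average degree of H. -/
section CaroWeiAux
open Finset
variable {V : Type*} [Fintype V] [DecidableEq V]




private lemma count_lemma (H : SimpleGraph V) [DecidableRel H.Adj] (v : V) :
    ((univ : Finset (V ≃ Fin (Fintype.card V))).filter
      (fun σ => ∀ w, H.Adj v w → σ v < σ w)).card * (H.degree v + 1)
    = (Fintype.card V).factorial := by
  classical
  set n := Fintype.card V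
  set A : Finset V := insert v (H.neighborFinset v) with hA
  have hvA : v ∈ A := mem_insert_self _ _
  have hAcard : A.card = H.degree v + 1 := by
    rw [hA, card_insert_of_notMem (by simp), SimpleGraph.card_neighborFinset_eq_degree]
  -- classes
  set C : V → Finset (V ≃ Fin n) :=
    fun u => univ.filter (fun σ => ∀ w ∈ A, σ u ≤ σ w) with hC
  have hCv : (univ : Finset (V ≃ Fin n)).filter
      (fun σ => ∀ w, H.Adj v w → σ v < σ w) = C v := by
    ext σ
    simp only [hC, mem_filter, mem_univ, true_and]
    constructor
    · intro h w hw
      rcases mem_insert.1 hw with rfl | hw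
      · exact le_refl _
      · exact (h w (by rwa [SimpleGraph.mem_neighborFinset] at hw)).le
    · intro h w hw
      have hne : v ≠ w := hw.ne
      have := h w (mem_insert_of_mem (by rwa [SimpleGraph.mem_neighborFinset]))
      exact lt_of_le_of_ne this (fun he => hne (σ.injective he))
  -- classes have equal size
  have hEq : ∀ u ∈ A, (C u).card = (C v).card := by
    intro u hu
    apply Finset.card_bij' (fun σ _ => (Equiv.swap v u).trans σ)
      (fun σ _ => (Equiv.swap v u).trans σ)
    · intro σ hσ
      simp only [hC, mem_filter, mem_univ, true_and] at hσ ⊢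
      intro w hw
      have hsw : Equiv.swap v u w ∈ A := by
        rcases eq_or_ne w v with rfl | h1
        · simpa [Equiv.swap_apply_left] using hu
        rcases eq_or_ne w u with rfl | h2
        · simpa [Equiv.swap_apply_right] using hvA
        · rwa [Equiv.swap_apply_of_ne_of_ne h1 h2]
      have := hσ _ hsw
      simpa [Equiv.swap_apply_right] using this
    · intro σ hσ
      simp only [hC, mem_filter, mem_univ, true_and] at hσ ⊢
      intro w hw
      have hsw : Equiv.swap v u w ∈ A := by
        rcases eq_or_ne w v with rfl | h1
        · simpa [Equiv.swap_apply_left] using hu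
        rcases eq_or_ne w u with rfl | h2
        · simpa [Equiv.swap_apply_right] using hvA
        · rwa [Equiv.swap_apply_of_ne_of_ne h1 h2]
      have := hσ _ hsw
      simpa [Equiv.swap_apply_left] using this
    · intro σ _
      ext x; simp [Equiv.swap_apply_self]
    · intro σ _
      ext x; simp [Equiv.swap_apply_self]
  -- disjoint cover
  have hcover : (univ : Finset (V ≃ Fin n)) = A.biUnion C := by
    apply le_antisymm
    · intro σ _
      obtain ⟨u, hu, hmin⟩ := A.exists_min_image (fun w => σ w) ⟨v, hvA⟩
      exact mem_biUnion.2 ⟨u, hu, by simp only [hC, mem_filter, mem_univ, true_and]; exact hmin⟩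
    · exact le_top
  have hdisj : ∀ u₁ ∈ A, ∀ u₂ ∈ A, u₁ ≠ u₂ → Disjoint (C u₁) (C u₂) := by
    intro u₁ h₁ u₂ h₂ hne
    rw [Finset.disjoint_left]
    intro σ hσ1 hσ2
    simp only [hC, mem_filter, mem_univ, true_and] at hσ1 hσ2
    exact hne (σ.injective (le_antisymm (hσ1 _ h₂) (hσ2 _ h₁)))
  have hsum : ∑ u ∈ A, (C u).card = (Fintype.card (V ≃ Fin n)) := by
    rw [← Finset.card_biUnion hdisj, ← hcover, Finset.card_univ]
  have hcardE : Fintype.card (V ≃ Fin n) = n.factorial := by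
    convert Fintype.card_equiv (Fintype.equivFin V)
  rw [hCv]
  calc (C v).card * (H.degree v + 1) = ∑ u ∈ A, (C v).card := by
        rw [Finset.sum_const, hAcard, smul_eq_mul, mul_comm]
      _ = ∑ u ∈ A, (C u).card := Finset.sum_congr rfl (fun u hu => (hEq u hu).symm)
      _ = n.factorial := by rw [hsum, hcardE]

private lemma caro_wei_main (H : SimpleGraph V) [DecidableRel H.Adj]
    (cw : ∀ v, ((univ : Finset (V ≃ Fin (Fintype.card V))).filter
      (fun σ => ∀ w, H.Adj v w → σ v < σ w)).card * (H.degree v + 1)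
      = (Fintype.card V).factorial)
    (alpha : ℕ)
    (halpha : ∀ S : Finset V, IsIndepFinset H S → S.card ≤ alpha) :
    (∑ v : V, (1 : ℝ) / (H.degree v + 1)) ≤ (alpha : ℝ) := by
  classical
  set n := Fintype.card V
  set c : V → ℕ := fun v => ((univ : Finset (V ≃ Fin n)).filter
      (fun σ => ∀ w, H.Adj v w → σ v < σ w)).card with hc
  -- double counting in ℕ
  have hdouble : ∑ v : V, c v
      = ∑ σ : V ≃ Fin n, (univ.filter (fun v => ∀ w, H.Adj v w → σ v < σ w)).card := by
    simp only [hc, Finset.card_filter]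
    exact Finset.sum_comm
  have hindep : ∀ σ : V ≃ Fin n,
      (univ.filter (fun v => ∀ w, H.Adj v w → σ v < σ w)).card ≤ alpha := by
    intro σ
    apply halpha
    intro u hu v hv hadj
    simp only [mem_filter, mem_univ, true_and] at hu hv
    exact absurd (hv u hadj.symm) (not_lt.2 (hu v hadj).le)
  have hsum : ∑ v : V, c v ≤ n.factorial * alpha := by
    rw [hdouble]
    calc ∑ σ : V ≃ Fin n, (univ.filter (fun v => ∀ w, H.Adj v w → σ v < σ w)).card
        ≤ ∑ _σ : V ≃ Fin n, alpha := Finset.sum_le_sum (fun σ _ => hindep σ)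
      _ = n.factorial * alpha := by
          simp [Finset.card_univ, Fintype.card_equiv (Fintype.equivFin V), mul_comm]
          left; convert Fintype.card_equiv (Fintype.equivFin V)
  have hfac : (0 : ℝ) < (n.factorial : ℝ) := by positivity
  have hterm : ∀ v : V, (1 : ℝ) / (H.degree v + 1) = (c v : ℝ) / (n.factorial : ℝ) := by
    intro v
    have hcast : (c v : ℝ) * ((H.degree v : ℝ) + 1) = (n.factorial : ℝ) := by
      have := cw v
      push_cast [← this]
      ring
    have hd : (0 : ℝ) < (H.degree v : ℝ) + 1 := by positivity
    field_simp
    linarith [hcast]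
  calc (∑ v : V, (1 : ℝ) / (H.degree v + 1))
      = (∑ v : V, (c v : ℝ)) / (n.factorial : ℝ) := by
        rw [Finset.sum_div]; exact Finset.sum_congr rfl (fun v _ => hterm v)
    _ ≤ ((n.factorial : ℝ) * alpha) / (n.factorial : ℝ) := by
        gcongr
        exact_mod_cast hsum
    _ = alpha := by field_simp

end CaroWeiAux

/-- The Caro–Wei bound: `α(H) ≥ Σ_v 1/(d(v)+1)`, and consequently
`α(H) ≥ n/(d_av + 1)` where `d_av = 2m/n` is the average degree. -/

theorem stmt_5 {V : Type*} [Fintype V] (H : SimpleGraph V) [DecidableRel H.Adj] :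
    (∑ v : V, (1 : ℝ) / (H.degree v + 1)) ≤ (alphaNum H : ℝ) ∧
      (Fintype.card V : ℝ) /
        (2 * (Nat.card H.edgeSet : ℝ) / (Fintype.card V : ℝ) + 1) ≤ (alphaNum H : ℝ) := by
  classical
  have halpha : ∀ S : Finset V, IsIndepFinset H S → S.card ≤ alphaNum H := by
    intro S hS
    apply le_csSup
    · exact ⟨Fintype.card V, fun k ⟨T, _, hT⟩ => hT ▸ T.card_le_univ⟩
    · exact ⟨S, hS, rfl⟩
  have h1 : (∑ v : V, (1 : ℝ) / (H.degree v + 1)) ≤ (alphaNum H : ℝ) :=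
    caro_wei_main H (fun v => count_lemma H v) (alphaNum H) halpha
  refine ⟨h1, ?_⟩
  set n := Fintype.card V with hn
  set m : ℝ := (Nat.card H.edgeSet : ℝ) with hm
  have hm0 : 0 ≤ m := by positivity
  rcases Nat.eq_zero_or_pos n with h0 | hpos
  · rw [h0]
    simp only [Nat.cast_zero, zero_div]
    positivity
  · have hn0 : (0 : ℝ) < n := by exact_mod_cast hpos
    have hsumdeg : (∑ v : V, ((H.degree v : ℝ) + 1)) = 2 * m + n := by
      have := H.sum_degrees_eq_twice_card_edges
      have hcard : Nat.card H.edgeSet = H.edgeFinset.card := by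
        exact Nat.card_eq_card_toFinset _
      have h2 : (∑ v : V, (H.degree v : ℝ)) = 2 * m := by
        rw [hm, hcard]
        exact_mod_cast congrArg (Nat.cast : ℕ → ℝ) this
      rw [Finset.sum_add_distrib, h2]
      simp [hn]
    have hcs : ((n : ℝ)) ^ 2 ≤ (2 * m + n) * ∑ v : V, (1 : ℝ) / (H.degree v + 1) := by
      have := Finset.sum_sq_le_sum_mul_sum_of_sq_eq_mul (Finset.univ : Finset V)
        (r := fun _ => (1 : ℝ)) (f := fun v => (H.degree v : ℝ) + 1)
        (g := fun v => (1 : ℝ) / (H.degree v + 1))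
        (fun v _ => by positivity) (fun v _ => by positivity)
        (fun v _ => by
          have : ((H.degree v : ℝ) + 1) ≠ 0 := by positivity
          field_simp)
      simpa [hsumdeg, Finset.card_univ] using this
    have hden : (0 : ℝ) < 2 * m + n := by positivity
    have h1' : 2 * m / (n : ℝ) + 1 = (2 * m + n) / n := by field_simp
    have hstep : (n : ℝ) / (2 * m / n + 1) = (n : ℝ) * n / (2 * m + n) := by
      rw [h1', div_div_eq_mul_div]
    rw [hstep, div_le_iff₀ hden]
    calc (n : ℝ) * n = (n : ℝ) ^ 2 := (sq (n:ℝ)).symm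
      _ ≤ (2 * m + n) * ∑ v : V, (1 : ℝ) / (H.degree v + 1) := hcs
      _ ≤ (2 * m + n) * (alphaNum H : ℝ) := by
          apply mul_le_mul_of_nonneg_left h1 hden.le
      _ = (alphaNum H : ℝ) * (2 * m + n) := mul_comm _ _
end

section
/- For α ≥ 1 an integer, if G is a graph of order n ≥ α with independence number α(G) ≤ α, then Γ_d(G) ≤ α(1 + 2 ln(n/α)). -/
open Finset

section Aux
variable {V : Type*} {G : SimpleGraph V} [DecidableEq V]

/-- a maximal independent subset -/
lemma exists_maximal_indep (G : SimpleGraph V) (T : Finset V) (hT : T.Nonempty) :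
    ∃ A, A ⊆ T ∧ IsIndepFinset G A ∧ A.Nonempty ∧ ∀ u ∈ T \ A, ∃ a ∈ A, G.Adj a u := by
  classical
  obtain ⟨A, hAmem, hmax⟩ := Finset.exists_max_image
    (T.powerset.filter fun S => IsIndepFinset G S) Finset.card
    ⟨∅, mem_filter.2 ⟨empty_mem_powerset _, by simp [IsIndepFinset]⟩⟩
  rw [mem_filter, mem_powerset] at hAmem
  obtain ⟨hAT, hAind⟩ := hAmem
  have hgrow : ∀ u ∈ T \ A, ∃ a ∈ A, G.Adj a u := by
    intro u hu
    rw [mem_sdiff] at hu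
    by_contra hcon
    push_neg at hcon
    have hins : IsIndepFinset G (insert u A) := by
      intro x hx y hy
      rcases mem_insert.1 hx with rfl | hx'
      · rcases mem_insert.1 hy with rfl | hy'
        · exact G.irrefl
        · exact fun h => hcon y hy' h.symm
      · rcases mem_insert.1 hy with rfl | hy'
        · exact fun h => hcon x hx' h
        · exact hAind x hx' y hy'
    have hmem : insert u A ∈ T.powerset.filter fun S => IsIndepFinset G S := by
      rw [mem_filter, mem_powerset]
      exact ⟨insert_subset hu.1 hAT, hins⟩
    have := hmax _ hmem
    rw [card_insert_of_notMem hu.2] at this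
    omega
  have hne : A.Nonempty := by
    obtain ⟨v, hv⟩ := hT
    have hmem : {v} ∈ T.powerset.filter fun S => IsIndepFinset G S := by
      rw [mem_filter, mem_powerset]
      refine ⟨singleton_subset_iff.2 hv, ?_⟩
      intro x hx y hy
      rw [mem_singleton] at hx hy
      subst hx; subst hy; exact G.irrefl
    have := hmax _ hmem
    rw [card_singleton] at this
    exact card_pos.1 (by omega)
  exact ⟨A, hAT, hAind, hne, hgrow⟩

variable (D : GraphOrientation G) [DecidableRel D.rel]

/-- directed edges within `T` -/
def ESet (T : Finset V) : Finset (V × V) :=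
  (T ×ˢ T).filter fun p => D.rel p.1 p.2

lemma eset_lower (α : ℕ) (hα : 1 ≤ α) :
    ∀ T : Finset V, (∀ S ⊆ T, IsIndepFinset G S → S.card ≤ α) →
    ((T.card : ℝ)^2 - α * T.card) / (2*α) ≤ ((ESet D T).card : ℝ) := by
  intro T
  induction T using Finset.strongInduction with
  | _ T ih =>
    intro hind
    rcases T.eq_empty_or_nonempty with rfl | hT
    · simp [ESet]
    obtain ⟨A, hAT, hAind, hAne, hgrow⟩ := exists_maximal_indep G T hT
    have hkα : A.card ≤ α := hind A hAT hAind
    have hkm : A.card ≤ T.card := card_le_card hAT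
    have hk1 : 1 ≤ A.card := card_pos.2 hAne
    set T' := T \ A with hT'
    have hss : T' ⊂ T := Finset.sdiff_ssubset hAT hAne
    have hcard' : T'.card = T.card - A.card := card_sdiff_of_subset hAT
    have hIH := ih T' hss (fun S hS h => hind S (hS.trans sdiff_subset) h)
    have hgrow' : ∀ u ∈ T', ∃ a ∈ A, G.Adj a u := hgrow
    classical
    set g : V → V := fun u => if h : u ∈ T' then (hgrow' u h).choose else u with hg
    have hgA : ∀ u ∈ T', g u ∈ A := by
      intro u hu; rw [hg]; simp only [dif_pos hu]; exact (hgrow' u hu).choose_spec.1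
    have hgadj : ∀ u ∈ T', G.Adj (g u) u := by
      intro u hu; rw [hg]; simp only [dif_pos hu]; exact (hgrow' u hu).choose_spec.2
    set f : V → V × V := fun u => if D.rel u (g u) then (u, g u) else (g u, u) with hf
    set F : Finset (V × V) := T'.image f with hF
    have hnotA : ∀ u ∈ T', u ∉ A := fun u hu => (mem_sdiff.1 hu).2
    have hFsub : F ⊆ ESet D T := by
      intro p hp
      obtain ⟨u, hu, rfl⟩ := mem_image.1 hp
      have huT : u ∈ T := (mem_sdiff.1 hu).1
      have hgT : g u ∈ T := hAT (hgA u hu)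
      rw [hf]
      by_cases hrel : D.rel u (g u)
      · simp only [if_pos hrel]
        exact mem_filter.2 ⟨mem_product.2 ⟨huT, hgT⟩, hrel⟩
      · rcases D.rel_of_adj _ _ (hgadj u hu) with h | h
        · simp only [if_neg hrel]
          exact mem_filter.2 ⟨mem_product.2 ⟨hgT, huT⟩, h⟩
        · exact absurd h hrel
    have hFcard : F.card = T'.card := by
      rw [hF]
      apply card_image_of_injOn
      intro u hu u' hu' heq
      simp only [hf] at heq
      by_cases h1 : D.rel u (g u) <;> by_cases h2 : D.rel u' (g u')
      · rw [if_pos h1, if_pos h2] at heq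
        exact congrArg Prod.fst heq
      · rw [if_pos h1, if_neg h2] at heq
        rw [Prod.mk.injEq] at heq
        have : u ∈ A := heq.1.symm ▸ hgA u' hu'
        exact absurd this (hnotA u hu)
      · rw [if_neg h1, if_pos h2] at heq
        rw [Prod.mk.injEq] at heq
        have : u' ∈ A := heq.1 ▸ hgA u hu
        exact absurd this (hnotA u' hu')
      · rw [if_neg h1, if_neg h2] at heq
        exact congrArg Prod.snd heq
    have hdisj : Disjoint F (ESet D T') := by
      rw [Finset.disjoint_left]
      intro p hp hp'
      obtain ⟨u, hu, rfl⟩ := mem_image.1 hp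
      have hmem := mem_product.1 (mem_filter.1 hp').1
      simp only [hf] at hmem
      by_cases h1 : D.rel u (g u)
      · rw [if_pos h1] at hmem
        exact hnotA _ hmem.2 (hgA u hu)
      · rw [if_neg h1] at hmem
        exact hnotA _ hmem.1 (hgA u hu)
    have hsub' : ESet D T' ⊆ ESet D T := by
      intro p hp
      rw [ESet, mem_filter, mem_product] at hp ⊢
      exact ⟨⟨sdiff_subset hp.1.1, sdiff_subset hp.1.2⟩, hp.2⟩
    have hcardle : F.card + (ESet D T').card ≤ (ESet D T).card := by
      rw [← card_union_of_disjoint hdisj]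
      exact card_le_card (union_subset hFsub hsub')
    -- arithmetic
    have hm : (T.card : ℝ) = (T'.card : ℝ) + A.card := by
      rw [hcard']; push_cast [Nat.cast_sub hkm]; ring
    have hαpos : (0:ℝ) < α := by exact_mod_cast hα
    have hkα' : (A.card : ℝ) ≤ α := by exact_mod_cast hkα
    have hkm' : (A.card : ℝ) ≤ T.card := by exact_mod_cast hkm
    have hk1' : (1:ℝ) ≤ A.card := by exact_mod_cast hk1
    have hFc : (F.card : ℝ) = (T.card : ℝ) - A.card := by
      rw [hFcard, hcard']; push_cast [Nat.cast_sub hkm]; ring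
    have hEc : (F.card : ℝ) + (ESet D T').card ≤ (ESet D T).card := by exact_mod_cast hcardle
    have h1 : (0:ℝ) ≤ ((α:ℝ) - A.card) * (2 * T.card - A.card) :=
      mul_nonneg (by linarith) (by linarith)
    have hXY : (T.card:ℝ)^2 - α*T.card
        ≤ (((T'.card:ℝ))^2 - α*T'.card) + ((T.card:ℝ) - A.card)*(2*α) := by
      nlinarith [h1, hm]
    have key : ((T.card : ℝ)^2 - α * T.card) / (2*α)
        ≤ (((T'.card:ℝ))^2 - α * T'.card) / (2*α) + ((T.card:ℝ) - A.card) := by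
      calc ((T.card : ℝ)^2 - α * T.card) / (2*α)
          ≤ ((((T'.card:ℝ))^2 - α*T'.card) + ((T.card:ℝ) - A.card)*(2*α)) / (2*α) := by
            gcongr
        _ = (((T'.card:ℝ))^2 - α * T'.card) / (2*α) + ((T.card:ℝ) - A.card) := by
            rw [add_div, mul_div_assoc, div_self (by positivity), mul_one]
    linarith [hIH, key, hEc, hFc]

lemma eset_card_eq_sum (T : Finset V) :
    (ESet D T).card = ∑ v ∈ T, (T.filter fun u => D.rel v u).card := by
  rw [Finset.card_eq_sum_card_fiberwise (f := fun p : V × V => p.1) (s := ESet D T)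
    (t := T) (fun p hp => (mem_product.1 (mem_filter.1 hp).1).1)]
  refine Finset.sum_congr rfl fun v hv => ?_
  apply Finset.card_bij (fun p _ => p.2)
  · intro p hp
    simp only [ESet, mem_filter, mem_product] at hp ⊢
    exact ⟨hp.1.1.2, hp.2 ▸ hp.1.2⟩
  · intro p hp q hq h
    simp only [mem_filter] at hp hq
    exact Prod.ext (hp.2.trans hq.2.symm) h
  · intro u hu
    simp only [mem_filter] at hu
    exact ⟨(v, u), by simp [ESet, mem_filter, mem_product, hu.1, hu.2, hv], rfl⟩

end Aux

section Greedy
variable {V : Type*} {G : SimpleGraph V} [DecidableEq V]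
variable (D : GraphOrientation G) [DecidableRel D.rel]

lemma greedy (α : ℕ) (hα : 1 ≤ α) :
    ∀ T : Finset V, (∀ S ⊆ T, IsIndepFinset G S → S.card ≤ α) →
    ∃ S : Finset V, S ⊆ T ∧ (∀ u ∈ T, u ∉ S → ∃ v ∈ S, D.rel v u) ∧
      (S.card : ℝ) ≤ α * (1 + 2 * Real.log ((max T.card α : ℕ) / α)) := by
  intro T
  induction T using Finset.strongInduction with
  | _ T ih =>
    intro hind
    have hαpos : (0:ℝ) < α := by exact_mod_cast hα
    by_cases hsmall : T.card ≤ α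
    · refine ⟨T, Finset.Subset.refl T, fun u hu hu' => absurd hu hu', ?_⟩
      rw [Nat.max_eq_right hsmall]
      rw [div_self (ne_of_gt hαpos), Real.log_one]
      push_cast
      linarith [(by exact_mod_cast hsmall : (T.card:ℝ) ≤ α)]
    push_neg at hsmall
    have hT : T.Nonempty := card_pos.1 (by omega)
    -- vertex of max outdegree
    obtain ⟨v, hvT, hvmax⟩ := Finset.exists_max_image T
      (fun v => (T.filter fun u => D.rel v u).card) hT
    set d : ℕ := (T.filter fun u => D.rel v u).card with hd
    -- average outdegree bound
    have hsum : ((T.card : ℝ)^2 - α * T.card) / (2*α)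
        ≤ (T.card : ℝ) * d := by
      refine le_trans (eset_lower D α hα T hind) ?_
      rw [eset_card_eq_sum]
      calc ((∑ w ∈ T, (T.filter fun u => D.rel w u).card : ℕ) : ℝ)
          ≤ ((T.card * d : ℕ) : ℝ) := by
            exact_mod_cast Finset.sum_le_card_nsmul T _ d (fun w hw => hvmax w hw)
        _ = (T.card : ℝ) * d := by push_cast; ring
    have hmpos : (0:ℝ) < T.card := by
      have : 0 < T.card := by omega
      exact_mod_cast this
    have hdge : ((T.card:ℝ) - α) / (2*α) ≤ d := by
      rw [div_le_iff₀ (by positivity)] at hsum ⊢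
      have := hsum
      nlinarith [hmpos]
    -- removed set
    set R : Finset V := insert v (T.filter fun u => D.rel v u) with hR
    have hvnot : v ∉ T.filter fun u => D.rel v u := by
      simp only [mem_filter, not_and]
      intro _ hrel
      exact G.irrefl (D.adj_of_rel _ _ hrel)
    have hRcard : R.card = d + 1 := by
      rw [hR, card_insert_of_notMem hvnot, hd]
    have hRT : R ⊆ T := insert_subset hvT (filter_subset _ _)
    set T' : Finset V := T \ R with hT'
    have hss : T' ⊂ T := Finset.sdiff_ssubset hRT ⟨v, mem_insert_self _ _⟩
    have hcard' : T'.card = T.card - (d+1) := by rw [hT', card_sdiff_of_subset hRT, hRcard]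
    obtain ⟨S', hS'sub, hS'dom, hS'card⟩ := ih T' hss
      (fun S hS h => hind S (hS.trans sdiff_subset) h)
    refine ⟨insert v S', insert_subset hvT (hS'sub.trans sdiff_subset), ?_, ?_⟩
    · intro u huT huS
      have huv : u ≠ v := fun h => huS (h ▸ mem_insert_self _ _)
      have huS' : u ∉ S' := fun h => huS (mem_insert_of_mem h)
      by_cases hu' : u ∈ T'
      · obtain ⟨w, hw, hrel⟩ := hS'dom u hu' huS'
        exact ⟨w, mem_insert_of_mem hw, hrel⟩
      · have : u ∈ R := by
          rw [hT', mem_sdiff] at hu'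
          push_neg at hu'
          exact hu' huT
        rcases mem_insert.1 this with rfl | hfil
        · exact absurd rfl huv
        · exact ⟨v, mem_insert_self _ _, (mem_filter.1 hfil).2⟩
    · -- cardinality bound
      have hcard_le : ((insert v S').card : ℝ) ≤ (S'.card : ℝ) + 1 := by
        exact_mod_cast card_insert_le v S'
      have hRcard_le : d + 1 ≤ T.card := hRcard ▸ card_le_card hRT
      have hma : (α:ℝ) + 1 ≤ (T.card:ℝ) := by exact_mod_cast hsmall
      have ha1 : (1:ℝ) ≤ (α:ℝ) := by exact_mod_cast hα
      set m : ℝ := (T.card : ℝ) with hmdef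
      set a : ℝ := (α : ℝ) with hadef
      have hm' : (T'.card : ℝ) = m - (d+1) := by
        rw [hmdef, hcard']; push_cast [Nat.cast_sub hRcard_le]; ring
      set M : ℝ := ((max T'.card α : ℕ) : ℝ) with hM
      have hMeq : M = max (T'.card : ℝ) a := by rw [hM, Nat.cast_max]
      have hdge' : m - a ≤ 2*a*d := by
        rw [div_le_iff₀ (by positivity)] at hdge
        linarith
      have hMle : 2*a*M ≤ 2*a*m - m := by
        rw [hMeq]
        rw [mul_max_of_nonneg _ _ (by positivity : (0:ℝ) ≤ 2*a), max_le_iff]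
        constructor
        · rw [hm']; nlinarith [hdge', hαpos]
        · have hprod : (0:ℝ) ≤ (2*a - 1) * (m - (a+1)) :=
            mul_nonneg (by linarith) (by linarith)
          nlinarith [hprod]
      have hMpos : (0:ℝ) < M := by
        rw [hMeq]; exact lt_of_lt_of_le hαpos (le_max_right _ _)
      have hfac : (0:ℝ) < 1 - 1/(2*a) := by
        rw [sub_pos, div_lt_one (by positivity)]
        linarith
      have hlog : Real.log (M / a) ≤ Real.log (m / a) - 1/(2*a) := by
        have e1 : m / a * (1 - 1/(2*a)) = (2*a*m - m) / (2*a*a) := by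
          field_simp
        have e2 : M / a = (2*a*M) / (2*a*a) := by
          field_simp
        have h1 : Real.log (M / a) ≤ Real.log (m/a * (1 - 1/(2*a))) := by
          apply Real.log_le_log (by positivity)
          rw [e1, e2]
          gcongr
        rw [Real.log_mul (by positivity) (ne_of_gt hfac)] at h1
        have h2 : Real.log (1 - 1/(2*a)) ≤ -(1/(2*a)) := by
          have := Real.log_le_sub_one_of_pos hfac
          linarith
        linarith
      have hmax' : ((max T.card α : ℕ) : ℝ) = m := by
        rw [Nat.max_eq_left (le_of_lt hsmall), hmdef]
      rw [hmax']
      have ha2 : a * (1/(2*a)) = 1/2 := by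
        field_simp
      have hmul := mul_le_mul_of_nonneg_left hlog (by positivity : (0:ℝ) ≤ a)
      have hfin : a * (1 + 2 * Real.log (M / a)) + 1 ≤ a * (1 + 2 * Real.log (m / a)) := by
        linarith [hmul, ha2]
      calc ((insert v S').card : ℝ) ≤ (S'.card : ℝ) + 1 := hcard_le
        _ ≤ a * (1 + 2 * Real.log (M / a)) + 1 := by linarith [hS'card]
        _ ≤ a * (1 + 2 * Real.log (m / a)) := hfin

end Greedy

noncomputable def someOrientation {V : Type*} (G : SimpleGraph V) : GraphOrientation G where
  rel u v := G.Adj u v ∧ WellOrderingRel u v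
  adj_of_rel u v h := h.1
  rel_of_adj u v h := by
    rcases trichotomous_of WellOrderingRel u v with h' | rfl | h'
    · exact Or.inl ⟨h, h'⟩
    · exact absurd h G.irrefl
    · exact Or.inr ⟨h.symm, h'⟩
  asymm u v h h' :=
    (IsWellFounded.wf : WellFounded (WellOrderingRel (α := V))).asymmetric _ _ h.2 h'.2

/-- If `G` has order `n ≥ α` and independence number at most `α ≥ 1`, then
`Γ_d(G) ≤ α(1 + 2 ln(n/α))`. -/
theorem stmt_6 {V : Type*} [Fintype V] (G : SimpleGraph V) (α : ℕ) (hα : 1 ≤ α)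
    (halpha : alphaNum G ≤ α) (hn : α ≤ Fintype.card V) :
    (GammaD G : ℝ) ≤ (α : ℝ) * (1 + 2 * Real.log ((Fintype.card V : ℝ) / α)) := by
  classical
  have hind : ∀ S : Finset V, IsIndepFinset G S → S.card ≤ α := by
    intro S hS
    have hbdd : BddAbove {k | ∃ S : Finset V, IsIndepFinset G S ∧ S.card = k} := by
      refine ⟨Fintype.card V, ?_⟩
      rintro k ⟨S, _, rfl⟩
      exact S.card_le_univ
    have : S.card ≤ alphaNum G := le_csSup hbdd ⟨S, hS, rfl⟩
    omega
  have key : ∀ D : GraphOrientation G,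
      (dirDomNum V D.rel : ℝ) ≤ (α : ℝ) * (1 + 2 * Real.log ((Fintype.card V : ℝ) / α)) := by
    intro D
    haveI : DecidableRel D.rel := fun u v => Classical.dec _
    obtain ⟨S, _, hdom, hcard⟩ := greedy D α hα Finset.univ (fun S _ h => hind S h)
    have hdom' : IsDirDomSet D.rel ↑S := by
      intro u hu
      obtain ⟨w, hw, hrel⟩ := hdom u (Finset.mem_univ u) (fun h => hu (Finset.mem_coe.2 h))
      exact ⟨w, Finset.mem_coe.2 hw, hrel⟩
    have h1 : dirDomNum V D.rel ≤ S.card := Nat.sInf_le ⟨S, hdom', rfl⟩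
    have h2 : ((max (Finset.univ : Finset V).card α : ℕ) : ℝ) = (Fintype.card V : ℝ) := by
      rw [Finset.card_univ, Nat.max_eq_left hn]
    calc (dirDomNum V D.rel : ℝ) ≤ (S.card : ℝ) := by exact_mod_cast h1
      _ ≤ (α : ℝ) * (1 + 2 * Real.log (((max (Finset.univ : Finset V).card α : ℕ) : ℝ) / α)) := hcard
      _ = (α : ℝ) * (1 + 2 * Real.log ((Fintype.card V : ℝ) / α)) := by rw [h2]
  have hne : {k | ∃ D : GraphOrientation G, dirDomNum V D.rel = k}.Nonempty :=
    ⟨_, someOrientation G, rfl⟩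
  have hbdd : BddAbove {k | ∃ D : GraphOrientation G, dirDomNum V D.rel = k} := by
    refine ⟨Fintype.card V, ?_⟩
    rintro k ⟨D, rfl⟩
    have hdomu : IsDirDomSet D.rel ↑(Finset.univ : Finset V) := by
      intro u hu
      exact absurd (Finset.mem_coe.2 (Finset.mem_univ u)) hu
    calc dirDomNum V D.rel ≤ (Finset.univ : Finset V).card :=
          Nat.sInf_le ⟨Finset.univ, hdomu, rfl⟩
      _ = Fintype.card V := Finset.card_univ
  obtain ⟨D₀, hD₀⟩ := Nat.sSup_mem hne hbdd
  have hG : GammaD G = dirDomNum V D₀.rel := hD₀.symm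
  rw [hG]
  exact key D₀
end

section
/- For every graph G of order n, Γ_d(G) ≤ α(G)·(1 + 2 ln(χ(G))), where χ(G) is the chromatic number. -/
section Aux

open Finset

attribute [local instance] Classical.propDecidable

variable {V : Type*} [Fintype V] (G : SimpleGraph V)

lemma indep_card_le (S : Finset V) (hS : IsIndepFinset G S) : S.card ≤ alphaNum G :=
  le_csSup ⟨Fintype.card V, by rintro k ⟨T, _, rfl⟩; exact T.card_le_univ⟩ ⟨S, hS, rfl⟩

lemma one_le_alpha (v : V) : 1 ≤ alphaNum G := by
  have h : IsIndepFinset G {v} := by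
    intro a ha b hb
    simp only [mem_singleton] at ha hb
    subst ha; subst hb; exact G.irrefl
  simpa using indep_card_le G {v} h

/-- The set of directed pairs of an orientation within `U`. -/
noncomputable def pairE {V : Type*} (D : V → V → Prop) (U : Finset V) : Finset (V × V) :=
  (U ×ˢ U).filter fun p => D p.1 p.2

variable (D : GraphOrientation G)

lemma turan_pairs : ∀ (n : ℕ) (U : Finset V), U.card = n →
    U.card * U.card ≤
      2 * alphaNum G * (pairE D.rel U).card + alphaNum G * U.card := by
  intro n
  induction n using Nat.strong_induction_on with
  | _ n ih =>
  intro U hU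
  subst hU
  rcases U.eq_empty_or_nonempty with rfl | hne
  · simp
  -- pick a maximum independent subset A of U
  obtain ⟨A, hA, hAmax⟩ := Finset.exists_max_image
    (U.powerset.filter fun A => IsIndepFinset G A) Finset.card
    ⟨∅, by rw [mem_filter]; simp [IsIndepFinset]⟩
  rw [mem_filter, mem_powerset] at hA
  obtain ⟨hAsub, hAind⟩ := hA
  have hAcard_le : A.card ≤ alphaNum G := indep_card_le G A hAind
  have hAne : 1 ≤ A.card := by
    obtain ⟨u, hu⟩ := hne
    have h1 : ({u} : Finset V) ∈ (U.powerset.filter fun A => IsIndepFinset G A) := by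
      rw [mem_filter, mem_powerset]
      refine ⟨by simpa using hu, ?_⟩
      intro a ha b hb
      simp only [mem_singleton] at ha hb
      subst ha; subst hb; exact G.irrefl
    simpa using hAmax {u} h1
  set B := U \ A with hBdef
  -- every vertex of B has a neighbour in A
  have hch : ∀ u ∈ B, ∃ a ∈ A, G.Adj u a := by
    intro u hu
    rw [hBdef, mem_sdiff] at hu
    by_contra hcon
    push_neg at hcon
    have hins : insert u A ∈ (U.powerset.filter fun A => IsIndepFinset G A) := by
      rw [mem_filter, mem_powerset]
      constructor
      · exact insert_subset hu.1 hAsub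
      · intro x hx y hy hadj
        rcases mem_insert.mp hx with hx' | hx' <;> rcases mem_insert.mp hy with hy' | hy'
        · subst hx'; subst hy'; exact G.irrefl hadj
        · subst hx'; exact hcon y hy' hadj
        · subst hy'; exact hcon x hx' hadj.symm
        · exact hAind x hx' y hy' hadj
    have := hAmax _ hins
    rw [card_insert_of_notMem hu.2] at this
    omega
  have hch' : ∀ u : V, ∃ a : V, u ∈ B → (a ∈ A ∧ G.Adj u a) := by
    intro u
    by_cases h : u ∈ B
    · obtain ⟨a, h1, h2⟩ := hch u h
      exact ⟨a, fun _ => ⟨h1, h2⟩⟩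
    · exact ⟨u, fun h' => absurd h' h⟩
  choose g hg using hch'
  set p : V → V × V := fun u => if D.rel u (g u) then (u, g u) else (g u, u) with hpdef
  have hpmem : ∀ u ∈ B, p u ∈ pairE D.rel U := by
    intro u hu
    have huU : u ∈ U := (sdiff_subset) hu
    have hgA : g u ∈ A := (hg u hu).1
    have hgU : g u ∈ U := hAsub hgA
    have hadj : G.Adj u (g u) := (hg u hu).2
    simp only [hpdef]
    by_cases hr : D.rel u (g u)
    · rw [if_pos hr]
      simp only [pairE, mem_filter, mem_product]
      exact ⟨⟨huU, hgU⟩, hr⟩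
    · rw [if_neg hr]
      rcases D.rel_of_adj _ _ hadj with h | h
      · exact absurd h hr
      · simp only [pairE, mem_filter, mem_product]
        exact ⟨⟨hgU, huU⟩, h⟩
  have hgnB : ∀ u ∈ B, g u ∉ B := by
    intro u hu
    have : g u ∈ A := (hg u hu).1
    rw [hBdef, mem_sdiff]
    tauto
  have hunB : ∀ u ∈ B, u ∉ A := by
    intro u hu
    rw [hBdef, mem_sdiff] at hu
    exact hu.2
  have hdisj : Disjoint (pairE D.rel B) (B.image p) := by
    rw [disjoint_right]
    intro q hq hq'
    obtain ⟨u, hu, hpu⟩ := mem_image.mp hq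
    simp only [pairE, mem_filter, mem_product] at hq'
    simp only [hpdef] at hpu
    by_cases hr : D.rel u (g u)
    · rw [if_pos hr] at hpu
      apply hgnB u hu
      rw [← hpu] at hq'
      exact hq'.1.2
    · rw [if_neg hr] at hpu
      apply hgnB u hu
      rw [← hpu] at hq'
      exact hq'.1.1
  have hinj : Set.InjOn p B := by
    intro u hu u' hu' heq
    simp only [hpdef] at heq
    by_cases h1 : D.rel u (g u) <;> by_cases h2 : D.rel u' (g u')
    · rw [if_pos h1, if_pos h2] at heq
      exact congrArg Prod.fst heq
    · rw [if_pos h1, if_neg h2] at heq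
      have h : u = g u' := congrArg Prod.fst heq
      exact absurd (h ▸ (hg u' hu').1) (hunB u hu)
    · rw [if_neg h1, if_pos h2] at heq
      have h : g u = u' := congrArg Prod.fst heq
      exact absurd (h ▸ (hg u hu).1) (hunB u' hu')
    · rw [if_neg h1, if_neg h2] at heq
      exact congrArg Prod.snd heq
  have himcard : (B.image p).card = B.card := card_image_of_injOn hinj
  have hsubU : pairE D.rel B ∪ B.image p ⊆ pairE D.rel U := by
    apply union_subset
    · apply filter_subset_filter
      exact product_subset_product sdiff_subset sdiff_subset
    · intro q hq
      obtain ⟨u, hu, hpu⟩ := mem_image.mp hq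
      exact hpu ▸ hpmem u hu
  have hEcount : (pairE D.rel B).card + B.card ≤ (pairE D.rel U).card := by
    have := card_le_card hsubU
    rwa [card_union_of_disjoint hdisj, himcard] at this
  -- apply the induction hypothesis to B
  have hBlt : B.card < U.card := by
    have h1 : B.card + A.card = U.card := card_sdiff_add_card_eq_card hAsub
    omega
  have hIH := ih B.card hBlt B rfl
  have hBA : B.card + A.card = U.card := card_sdiff_add_card_eq_card hAsub
  set α := alphaNum G
  set EB := (pairE D.rel B).card
  set EU := (pairE D.rel U).card
  set b := B.card
  set a := A.card
  nlinarith [hIH, hEcount, hAcard_le, hAne, hBA, Nat.zero_le b, Nat.zero_le EB]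

lemma pairE_card_eq_sum (U : Finset V) :
    (pairE D.rel U).card = ∑ v ∈ U, (U.filter fun u => D.rel v u).card := by
  have h1 : (pairE D.rel U).card
      = ∑ v ∈ U, ((pairE D.rel U).filter fun p => p.1 = v).card := by
    apply Finset.card_eq_sum_card_fiberwise
    intro p hp
    simp only [mem_coe, pairE, mem_filter, mem_product] at hp
    exact hp.1.1
  rw [h1]
  apply Finset.sum_congr rfl
  intro v hv
  apply Finset.card_bij (fun p _ => p.2)
  · intro p hp
    simp only [pairE, mem_filter, mem_product] at hp ⊢
    exact ⟨hp.1.1.2, hp.2 ▸ hp.1.2⟩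
  · intro p hp q hq hpq
    simp only [pairE, mem_filter, mem_product] at hp hq
    exact Prod.ext (hp.2.trans hq.2.symm) hpq
  · intro u hu
    simp only [mem_filter] at hu
    refine ⟨(v, u), ?_, rfl⟩
    simp only [pairE, mem_filter, mem_product]
    exact ⟨⟨⟨hv, hu.1⟩, hu.2⟩, trivial⟩

lemma exists_big_outdeg (U : Finset V) (hne : U.Nonempty) :
    ∃ v ∈ U, (pairE D.rel U).card ≤ U.card * (U.filter fun u => D.rel v u).card := by
  apply Finset.exists_le_of_sum_le hne
  rw [Finset.sum_const, ← Finset.mul_sum, smul_eq_mul, ← pairE_card_eq_sum]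

/-- The analytic bound function. -/
noncomputable def fBound (α : ℕ) (m : ℕ) : ℝ :=
  if m ≤ α then (m : ℝ) else α + 2 * α * Real.log (m / α)

lemma key_ineq (α m m' d : ℕ) (hα : 1 ≤ α) (hm : α < m) (hsum : m' + (d + 1) = m)
    (hd : m ≤ 2 * α * d + α) : fBound α m' + 1 ≤ fBound α m := by
  have ha : (0 : ℝ) < α := by exact_mod_cast hα
  have hM : (α : ℝ) + 1 ≤ m := by exact_mod_cast hm
  have hmpos : (0 : ℝ) < m := by linarith
  simp only [fBound]
  rw [if_neg (by omega : ¬ m ≤ α)]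
  have ha1 : (1 : ℝ) ≤ α := by exact_mod_cast hα
  have hlogm : 1 - (α : ℝ) / m ≤ Real.log ((m : ℝ) / α) := by
    have := Real.one_sub_inv_le_log_of_pos (x := (m : ℝ) / α) (by positivity)
    rwa [inv_div] at this
  by_cases h' : m' ≤ α
  · rw [if_pos h']
    have hm' : (m' : ℝ) ≤ α := by exact_mod_cast h'
    have h1 : (α : ℝ) / m ≤ α / (α + 1) :=
      div_le_div_of_nonneg_left (by linarith) (by linarith) hM
    have h2 : 1 - (α : ℝ) / (α + 1) = 1 / (α + 1) := by field_simp; ring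
    have h3 : 1 / ((α : ℝ) + 1) ≤ Real.log ((m : ℝ) / α) := by linarith
    have h4 : 1 ≤ 2 * (α : ℝ) * (1 / (α + 1)) := by
      rw [mul_one_div, le_div_iff₀ (by linarith)]
      linarith
    have h5 : 2 * (α : ℝ) * (1 / (α + 1)) ≤ 2 * α * Real.log ((m : ℝ) / α) :=
      mul_le_mul_of_nonneg_left h3 (by linarith)
    linarith
  · rw [if_neg h']
    push_neg at h'
    have hm'pos : (0 : ℝ) < m' := by
      have : 1 ≤ m' := by omega
      exact_mod_cast this
    have hm'lt : (m' : ℝ) + (d + 1) = m := by exact_mod_cast hsum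
    have hdle : (m : ℝ) ≤ 2 * α * d + α := by exact_mod_cast hd
    have hlogd : Real.log ((m : ℝ) / α) - Real.log ((m' : ℝ) / α)
        = Real.log ((m : ℝ) / m') := by
      rw [Real.log_div (by positivity) (by positivity),
          Real.log_div (by positivity) (by positivity),
          Real.log_div (by positivity) (by positivity)]
      ring
    have hlog2 : 1 - (m' : ℝ) / m ≤ Real.log ((m : ℝ) / m') := by
      have := Real.one_sub_inv_le_log_of_pos (x := (m : ℝ) / m') (by positivity)
      rwa [inv_div] at this
    have h3 : 1 - (m' : ℝ) / m = ((d : ℝ) + 1) / m := by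
      field_simp
      linarith
    have h4 : 1 / (2 * (α : ℝ)) ≤ ((d : ℝ) + 1) / m := by
      rw [div_le_div_iff₀ (by positivity) hmpos]
      nlinarith
    have h5 : 1 ≤ 2 * (α : ℝ) * Real.log ((m : ℝ) / m') := by
      have h6 : 2 * (α : ℝ) * (1 / (2 * α)) ≤ 2 * α * Real.log ((m : ℝ) / m') := by
        apply mul_le_mul_of_nonneg_left _ (by linarith)
        linarith
      have h7 : 2 * (α : ℝ) * (1 / (2 * α)) = 1 := by field_simp
      linarith
    have h8 : 2 * (α : ℝ) * Real.log ((m : ℝ) / α)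
        - 2 * α * Real.log ((m' : ℝ) / α) = 2 * α * Real.log ((m : ℝ) / m') := by
      rw [← hlogd]; ring
    linarith

lemma greedy_s7 : ∀ (n : ℕ) (U : Finset V), U.card = n →
    ∃ S : Finset V, S ⊆ U ∧ (∀ u ∈ U, u ∉ S → ∃ v ∈ S, D.rel v u) ∧
      (S.card : ℝ) ≤ fBound (alphaNum G) U.card := by
  intro n
  induction n using Nat.strong_induction_on with
  | _ n ih =>
  intro U hU
  subst hU
  set α := alphaNum G with hαdef
  by_cases hsmall : U.card ≤ α
  · exact ⟨U, subset_rfl, fun u hu hnu => absurd hu hnu,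
      by rw [fBound, if_pos hsmall]⟩
  · push_neg at hsmall
    have hne : U.Nonempty := Finset.card_pos.mp (by omega)
    have hα1 : 1 ≤ α := one_le_alpha G hne.choose
    obtain ⟨v, hv, hvd⟩ := exists_big_outdeg G D U hne
    have htur := turan_pairs G D U.card U rfl
    set d := (U.filter fun u => D.rel v u).card with hddef
    have hstep : U.card ≤ 2 * α * d + α := by
      have h1 : U.card * U.card ≤ U.card * (2 * α * d + α) := by
        calc U.card * U.card ≤ 2 * α * (pairE D.rel U).card + α * U.card := htur
          _ ≤ 2 * α * (U.card * d) + α * U.card :=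
              Nat.add_le_add_right (Nat.mul_le_mul_left _ hvd) _
          _ = U.card * (2 * α * d + α) := by ring
      exact Nat.le_of_mul_le_mul_left h1 (by omega)
    set W := U.filter fun u => D.rel v u with hWdef
    have hvW : v ∉ W := by
      intro h
      rw [hWdef, Finset.mem_filter] at h
      exact G.irrefl (D.adj_of_rel v v h.2)
    have hins : insert v W ⊆ U := Finset.insert_subset hv (Finset.filter_subset _ _)
    set U' := U \ insert v W with hU'def
    have hcard' : U'.card + (d + 1) = U.card := by
      have h1 := Finset.card_sdiff_add_card_eq_card hins
      rwa [Finset.card_insert_of_notMem hvW] at h1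
    have hlt : U'.card < U.card := by omega
    obtain ⟨S', hS'sub, hS'dom, hS'card⟩ := ih U'.card hlt U' rfl
    refine ⟨insert v S',
      Finset.insert_subset hv (hS'sub.trans Finset.sdiff_subset), ?_, ?_⟩
    · intro u hu hnu
      by_cases hu' : u ∈ U'
      · obtain ⟨w, hw, hrw⟩ := hS'dom u hu'
          (fun h => hnu (Finset.mem_insert_of_mem h))
        exact ⟨w, Finset.mem_insert_of_mem hw, hrw⟩
      · have hmem : u ∈ insert v W := by
          rw [hU'def, Finset.mem_sdiff] at hu'
          push_neg at hu'
          exact hu' hu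
        rcases Finset.mem_insert.mp hmem with rfl | h
        · exact absurd (Finset.mem_insert_self u S') hnu
        · exact ⟨v, Finset.mem_insert_self v S', (Finset.mem_filter.mp h).2⟩
    · have hkey := key_ineq α U.card U'.card d hα1 hsmall hcard' hstep
      calc ((insert v S').card : ℝ) ≤ (S'.card : ℝ) + 1 := by
            exact_mod_cast Finset.card_insert_le v S'
        _ ≤ fBound α U'.card + 1 := by linarith
        _ ≤ fBound α U.card := hkey

lemma card_le_alpha_mul_chrom :
    Fintype.card V ≤ alphaNum G * G.chromaticNumber.toNat := by
  obtain ⟨C⟩ := G.colorable_chromaticNumber_of_fintype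
  have h1 : (univ : Finset V).card
      = ∑ i ∈ (univ : Finset (Fin G.chromaticNumber.toNat)),
        ((univ : Finset V).filter fun v => C v = i).card :=
    Finset.card_eq_sum_card_fiberwise fun v _ => mem_univ _
  have h2 : ∀ i : Fin G.chromaticNumber.toNat,
      ((univ : Finset V).filter fun v => C v = i).card ≤ alphaNum G := by
    intro i
    apply indep_card_le
    intro u hu w hw hadj
    rw [mem_filter] at hu hw
    exact C.valid hadj (hu.2.trans hw.2.symm)
  calc Fintype.card V = _ := h1
    _ ≤ ∑ _i ∈ (univ : Finset (Fin G.chromaticNumber.toNat)), alphaNum G :=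
        Finset.sum_le_sum fun i _ => h2 i
    _ = G.chromaticNumber.toNat * alphaNum G := by
        rw [Finset.sum_const, smul_eq_mul, Finset.card_univ, Fintype.card_fin]
    _ = alphaNum G * G.chromaticNumber.toNat := mul_comm _ _

lemma fBound_le_final :
    fBound (alphaNum G) (Fintype.card V)
      ≤ (alphaNum G : ℝ) * (1 + 2 * Real.log (G.chromaticNumber.toNat : ℝ)) := by
  set α := alphaNum G with hαdef
  set χ := G.chromaticNumber.toNat with hχdef
  have hlogχ : 0 ≤ Real.log (χ : ℝ) := Real.log_natCast_nonneg χ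
  by_cases h : Fintype.card V ≤ α
  · rw [fBound, if_pos h]
    have h1 : (Fintype.card V : ℝ) ≤ α := by exact_mod_cast h
    have h2 : (α : ℝ) ≤ α * (1 + 2 * Real.log (χ : ℝ)) :=
      le_mul_of_one_le_right (by positivity) (by linarith)
    linarith
  · rw [fBound, if_neg h]
    push_neg at h
    have hn1 : 1 ≤ Fintype.card V := by omega
    have hVne : Nonempty V := Fintype.card_pos_iff.mp (by omega)
    have hα1 : 1 ≤ α := one_le_alpha G (Classical.arbitrary V)
    have ha : (0 : ℝ) < α := by exact_mod_cast hα1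
    have hnα := card_le_alpha_mul_chrom G
    have hdiv : (Fintype.card V : ℝ) / α ≤ (χ : ℝ) := by
      rw [div_le_iff₀ ha]
      calc (Fintype.card V : ℝ) ≤ (α * χ : ℕ) := by exact_mod_cast hnα
        _ = (χ : ℝ) * α := by push_cast; ring
    have hlog : Real.log ((Fintype.card V : ℝ) / α) ≤ Real.log (χ : ℝ) :=
      Real.log_le_log (by positivity) hdiv
    have := mul_le_mul_of_nonneg_left hlog (by positivity : (0:ℝ) ≤ 2 * α)
    nlinarith

end Aux

/-- `Γ_d(G) ≤ α(G)(1 + 2 ln χ(G))`. -/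
theorem stmt_7 {V : Type*} [Fintype V] (G : SimpleGraph V) :
    (GammaD G : ℝ) ≤
      (alphaNum G : ℝ) * (1 + 2 * Real.log (G.chromaticNumber.toNat : ℝ)) := by
  classical
  set R : ℝ := (alphaNum G : ℝ) * (1 + 2 * Real.log (G.chromaticNumber.toNat : ℝ))
    with hRdef
  have hR0 : 0 ≤ R := by
    have := Real.log_natCast_nonneg (G.chromaticNumber.toNat)
    have h0 : (0:ℝ) ≤ (alphaNum G : ℝ) := Nat.cast_nonneg _
    rw [hRdef]
    nlinarith
  have key : ∀ k ∈ {k | ∃ D : GraphOrientation G, dirDomNum V D.rel = k},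
      k ≤ Nat.floor R := by
    rintro k ⟨D, rfl⟩
    rw [Nat.le_floor_iff hR0]
    obtain ⟨S, hsub, hdom, hcard⟩ :=
      greedy_s7 G D (Fintype.card V) Finset.univ (by simp)
    have h1 : dirDomNum V D.rel ≤ S.card := by
      apply Nat.sInf_le
      refine ⟨S, ?_, rfl⟩
      intro u hu
      obtain ⟨w, hw, hrw⟩ := hdom u (Finset.mem_univ u) (by simpa using hu)
      exact ⟨w, by simpa using hw, hrw⟩
    have h2 := fBound_le_final G
    rw [Finset.card_univ] at hcard
    calc (dirDomNum V D.rel : ℝ) ≤ (S.card : ℝ) := by exact_mod_cast h1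
      _ ≤ fBound (alphaNum G) (Fintype.card V) := hcard
      _ ≤ R := h2
  calc (GammaD G : ℝ) ≤ (Nat.floor R : ℝ) := by
        exact_mod_cast csSup_le' key
    _ ≤ R := Nat.floor_le hR0
end

section
/- For every graph G of order n, Γ_d(G) ≤ α(G)·(1 + 2 ln(d_av(G) + 1)), where d_av(G) = 2m/n is the average degree of G. -/
set_option linter.unusedSectionVars false

attribute [local instance] Classical.propDecidable

namespace Stmt8Aux

variable {V : Type*} [Fintype V] (G : SimpleGraph V)

lemma indep_card_le (S : Finset V) (hS : IsIndepFinset G S) : S.card ≤ alphaNum G :=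
  le_csSup ⟨Fintype.card V, by rintro k ⟨S, _, rfl⟩; exact S.card_le_univ⟩ ⟨S, hS, rfl⟩

/-- A maximum (hence maximal) independent subset of any finset. -/
lemma exists_max_indep (T : Finset V) (hT : T.Nonempty) :
    ∃ I : Finset V, I ⊆ T ∧ I.Nonempty ∧ I.card ≤ alphaNum G ∧
      ∀ w ∈ T, w ∉ I → ∃ v ∈ I, G.Adj v w := by
  obtain ⟨t, ht⟩ := hT
  have htindep : IsIndepFinset G {t} := by
    intro u hu v hv
    simp only [Finset.mem_singleton] at hu hv
    subst hu; subst hv; exact G.irrefl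
  have hne : (T.powerset.filter (fun S => IsIndepFinset G S)).Nonempty :=
    ⟨{t}, by simp only [Finset.mem_filter, Finset.mem_powerset]
             exact ⟨Finset.singleton_subset_iff.2 ht, htindep⟩⟩
  obtain ⟨I, hImem, hImax⟩ := Finset.exists_max_image _ Finset.card hne
  simp only [Finset.mem_filter, Finset.mem_powerset] at hImem
  obtain ⟨hIT, hIind⟩ := hImem
  have hsing : ({t} : Finset V).card ≤ I.card := by
    apply hImax
    simp only [Finset.mem_filter, Finset.mem_powerset]
    exact ⟨Finset.singleton_subset_iff.2 ht, htindep⟩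
  refine ⟨I, hIT, ?_, indep_card_le G I hIind, ?_⟩
  · rw [Finset.card_singleton] at hsing
    exact Finset.card_pos.1 (by omega)
  · intro w hw hwI
    by_contra hcon
    push_neg at hcon
    have hind : IsIndepFinset G (insert w I) := by
      intro u hu v hv hadj
      rw [Finset.mem_insert] at hu hv
      rcases hu with rfl | hu
      · rcases hv with rfl | hv
        · exact G.irrefl hadj
        · exact hcon v hv hadj.symm
      · rcases hv with rfl | hv
        · exact hcon u hu hadj
        · exact hIind u hu v hv hadj
    have hle : (insert w I).card ≤ I.card := by
      apply hImax
      simp only [Finset.mem_filter, Finset.mem_powerset]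
      exact ⟨Finset.insert_subset hw hIT, hind⟩
    rw [Finset.card_insert_of_notMem hwI] at hle
    omega

lemma card_pairs (R : V → V → Prop) (T : Finset V) :
    ((T ×ˢ T).filter fun p => R p.1 p.2).card = ∑ v ∈ T, (T.filter fun w => R v w).card := by
  rw [Finset.card_eq_sum_card_fiberwise
    (f := Prod.fst) (t := T)
    (fun p hp => (Finset.mem_product.1 (Finset.mem_filter.1 hp).1).1)]
  refine Finset.sum_congr rfl fun v hv => ?_
  apply Finset.card_bij (fun p _ => p.2)
  · rintro ⟨x, y⟩ hp
    simp only [Finset.mem_filter, Finset.mem_product] at hp ⊢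
    obtain ⟨⟨⟨hx, hy⟩, hR⟩, h1⟩ := hp
    subst h1
    exact ⟨hy, hR⟩
  · rintro ⟨x, y⟩ hp ⟨x', y'⟩ hp' h
    simp only [Finset.mem_filter, Finset.mem_product] at hp hp'
    simp only at h
    ext <;> simp [hp.2, hp'.2, h]
  · intro w hw
    simp only [Finset.mem_filter] at hw
    exact ⟨(v, w), by simp [Finset.mem_filter, Finset.mem_product, hv, hw.1, hw.2], rfl⟩

/-- Turán-type bound: if every edge of `G` yields an `R`-pair, then the number of `R`-pairs
inside `T` is at least `(t² - αt)/(2α)`. -/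
lemma edge_lower (R : V → V → Prop) (hR : ∀ u v, G.Adj u v → R u v ∨ R v u) :
    ∀ (n : ℕ) (T : Finset V), T.card ≤ n →
      ((T.card : ℝ))^2 - (alphaNum G : ℝ) * T.card ≤
        2 * (alphaNum G : ℝ) * (((T ×ˢ T).filter fun p => R p.1 p.2).card : ℝ) := by
  intro n
  induction n with
  | zero =>
    intro T hT
    rw [Finset.card_eq_zero.1 (Nat.le_zero.1 hT)]
    simp
  | succ n ih =>
    intro T hT
    rcases T.eq_empty_or_nonempty with rfl | hTne
    · simp
    obtain ⟨I, hIT, hIne, hIa, hIdom⟩ := exists_max_indep G T hTne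
    set T' := T \ I with hT'def
    have hT'card : T'.card = T.card - I.card := Finset.card_sdiff_of_subset hIT
    have hIle : I.card ≤ T.card := Finset.card_le_card hIT
    have hIpos : 1 ≤ I.card := hIne.card_pos
    have hT'n : T'.card ≤ n := by omega
    have IH := ih T' hT'n
    -- the choice function producing, for each w ∈ T', an R-pair between I and w
    set f : V → V × V := fun w =>
      if h : ∃ v, v ∈ I ∧ (R v w ∨ R w v) then
        (if R h.choose w then (h.choose, w) else (w, h.choose))
      else (w, w) with hfdef
    have hf : ∀ w ∈ T', ∃ v ∈ I, (f w = (v, w) ∧ R v w) ∨ (f w = (w, v) ∧ R w v) := by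
      intro w hw
      rw [hT'def, Finset.mem_sdiff] at hw
      obtain ⟨v, hvI, hadj⟩ := hIdom w hw.1 hw.2
      have hex : ∃ v, v ∈ I ∧ (R v w ∨ R w v) := ⟨v, hvI, hR _ _ hadj⟩
      refine ⟨hex.choose, hex.choose_spec.1, ?_⟩
      by_cases h2 : R hex.choose w
      · left
        refine ⟨?_, h2⟩
        simp only [hfdef]
        rw [dif_pos hex, if_pos h2]
      · right
        refine ⟨?_, (hex.choose_spec.2).resolve_left h2⟩
        simp only [hfdef]
        rw [dif_pos hex, if_neg h2]
    have hwnotI : ∀ w ∈ T', w ∉ I := fun w hw => (Finset.mem_sdiff.1 hw).2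
    -- the image of f on T' lands in F_T, is injective, and avoids F_{T'}
    have hsub : (((T' ×ˢ T').filter fun p => R p.1 p.2) ∪ T'.image f)
        ⊆ ((T ×ˢ T).filter fun p => R p.1 p.2) := by
      intro p hp
      rcases Finset.mem_union.1 hp with hp | hp
      · simp only [Finset.mem_filter, Finset.mem_product] at hp ⊢
        exact ⟨⟨Finset.sdiff_subset hp.1.1, Finset.sdiff_subset hp.1.2⟩, hp.2⟩
      · obtain ⟨w, hw, rfl⟩ := Finset.mem_image.1 hp
        obtain ⟨v, hvI, hcase⟩ := hf w hw
        have hvT : v ∈ T := hIT hvI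
        have hwT : w ∈ T := Finset.sdiff_subset hw
        rcases hcase with ⟨heq, hrel⟩ | ⟨heq, hrel⟩
        · rw [heq]
          simp only [Finset.mem_filter, Finset.mem_product]
          exact ⟨⟨hvT, hwT⟩, hrel⟩
        · rw [heq]
          simp only [Finset.mem_filter, Finset.mem_product]
          exact ⟨⟨hwT, hvT⟩, hrel⟩
    have hdisj : Disjoint ((T' ×ˢ T').filter fun p => R p.1 p.2) (T'.image f) := by
      rw [Finset.disjoint_right]
      intro p hp hp'
      obtain ⟨w, hw, rfl⟩ := Finset.mem_image.1 hp
      obtain ⟨v, hvI, hcase⟩ := hf w hw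
      have hvT' : v ∉ T' := fun h => (Finset.mem_sdiff.1 h).2 hvI
      simp only [Finset.mem_filter, Finset.mem_product] at hp'
      rcases hcase with ⟨heq, _⟩ | ⟨heq, _⟩
      · rw [heq] at hp'; exact hvT' hp'.1.1
      · rw [heq] at hp'; exact hvT' hp'.1.2
    have hinj : Set.InjOn f ↑T' := by
      intro w hw w' hw' heq
      obtain ⟨v, hvI, hcase⟩ := hf w (Finset.mem_coe.1 hw)
      obtain ⟨v', hvI', hcase'⟩ := hf w' (Finset.mem_coe.1 hw')
      have hwI : w ∉ I := hwnotI w (Finset.mem_coe.1 hw)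
      have hwI' : w' ∉ I := hwnotI w' (Finset.mem_coe.1 hw')
      rcases hcase with ⟨h1, _⟩ | ⟨h1, _⟩ <;> rcases hcase' with ⟨h2, _⟩ | ⟨h2, _⟩ <;>
        rw [h1, h2] at heq <;>
        simp only [Prod.mk.injEq] at heq
      · exact heq.2
      · exfalso; apply hwI; rw [heq.2]; exact hvI'
      · exfalso; apply hwI; rw [heq.1]; exact hvI'
      · exact heq.1
    have hcount : ((T' ×ˢ T').filter fun p => R p.1 p.2).card + T'.card
        ≤ ((T ×ˢ T).filter fun p => R p.1 p.2).card := by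
      calc ((T' ×ˢ T').filter fun p => R p.1 p.2).card + T'.card
          = (((T' ×ˢ T').filter fun p => R p.1 p.2) ∪ T'.image f).card := by
            rw [Finset.card_union_of_disjoint hdisj, Finset.card_image_of_injOn hinj]
        _ ≤ _ := Finset.card_le_card hsub
    -- arithmetic
    have hacast : (I.card : ℝ) ≤ (alphaNum G : ℝ) := Nat.cast_le.2 hIa
    have hT'cast : (T'.card : ℝ) = (T.card : ℝ) - (I.card : ℝ) := by
      rw [hT'card, Nat.cast_sub hIle]
    have hcount' : (((T' ×ˢ T').filter fun p => R p.1 p.2).card : ℝ) + (T'.card : ℝ)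
        ≤ (((T ×ˢ T).filter fun p => R p.1 p.2).card : ℝ) := by exact_mod_cast hcount
    have hIpos' : (1 : ℝ) ≤ (I.card : ℝ) := by exact_mod_cast hIpos
    have hIle' : (I.card : ℝ) ≤ (T.card : ℝ) := by exact_mod_cast hIle
    nlinarith [IH, hcount', hT'cast, hacast, hIpos', hIle',
      mul_nonneg (sub_nonneg.2 hIle') (sub_nonneg.2 hacast)]


lemma log_lb (a : ℝ) (ha : 1 ≤ a) : 1 / (2 * a) ≤ Real.log ((a + 1) / a) := by
  have hpos : (0 : ℝ) < a := by linarith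
  have h1 : (0 : ℝ) < a / (a + 1) := by positivity
  have h2 := Real.log_le_sub_one_of_pos h1
  have h3 : Real.log (a / (a + 1)) = - Real.log ((a + 1) / a) := by
    rw [← Real.log_inv]
    congr 1
    field_simp
  rw [h3] at h2
  have h4 : a / (a + 1) - 1 = -(1 / (a + 1)) := by field_simp; ring
  rw [h4] at h2
  have h5 : 1 / (a + 1) ≤ Real.log ((a + 1) / a) := by linarith
  have h6 : 1 / (2 * a) ≤ 1 / (a + 1) := by
    apply one_div_le_one_div_of_le (by linarith) (by linarith)
  linarith

lemma greedy (D : GraphOrientation G) (ha : 1 ≤ alphaNum G) :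
    ∀ (n : ℕ) (T : Finset V), T.card ≤ n →
      ∃ S : Finset V, S ⊆ T ∧ (∀ u ∈ T, u ∉ S → ∃ v ∈ S, D.rel v u) ∧
        (S.card : ℝ) ≤ (alphaNum G : ℝ) *
          (1 + 2 * Real.log (max 1 ((T.card : ℝ) / (alphaNum G : ℝ)))) := by
  have ha' : (1 : ℝ) ≤ (alphaNum G : ℝ) := by exact_mod_cast ha
  have ha0 : (0 : ℝ) < (alphaNum G : ℝ) := by linarith
  intro n
  induction n with
  | zero =>
    intro T hT
    have : T = ∅ := Finset.card_eq_zero.1 (Nat.le_zero.1 hT)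
    subst this
    refine ⟨∅, Finset.Subset.refl _, by simp, ?_⟩
    have h0 : (0 : ℝ) ≤ Real.log (max 1 ((0 : ℝ) / (alphaNum G : ℝ))) :=
      Real.log_nonneg (le_max_left _ _)
    simp only [Finset.card_empty, Nat.cast_zero]
    nlinarith
  | succ n ih =>
    intro T hT
    by_cases hsmall : T.card ≤ alphaNum G
    · -- small case: take S = T
      refine ⟨T, Finset.Subset.refl _, fun u hu huS => absurd hu huS, ?_⟩
      have h0 : (0 : ℝ) ≤ Real.log (max 1 ((T.card : ℝ) / (alphaNum G : ℝ))) :=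
        Real.log_nonneg (le_max_left _ _)
      have h1 : (T.card : ℝ) ≤ (alphaNum G : ℝ) := by exact_mod_cast hsmall
      nlinarith
    · push_neg at hsmall
      have hTne : T.Nonempty := Finset.card_pos.1 (by omega)
      set a : ℝ := (alphaNum G : ℝ) with hadef
      set t : ℝ := (T.card : ℝ) with htdef
      have hta : a + 1 ≤ t := by
        have h : alphaNum G + 1 ≤ T.card := hsmall
        rw [hadef, htdef]
        exact_mod_cast h
      have ht0 : (0 : ℝ) < t := by linarith
      -- find a vertex of large out-degree
      set F := ((T ×ˢ T).filter fun p => D.rel p.1 p.2) with hFdef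
      have hedge : t ^ 2 - a * t ≤ 2 * a * (F.card : ℝ) :=
        edge_lower G D.rel (D.rel_of_adj) T.card T le_rfl
      have hsum : ∑ v ∈ T, (T.filter fun w => D.rel v w).card = F.card :=
        (card_pairs D.rel T).symm
      have hpigeon : ∃ v ∈ T, F.card ≤ T.card * (T.filter fun w => D.rel v w).card := by
        apply Finset.exists_le_of_sum_le hTne
        rw [Finset.sum_const, smul_eq_mul, ← Finset.mul_sum, hsum]
      obtain ⟨v, hvT, hvdeg⟩ := hpigeon
      set N := T.filter fun w => D.rel v w with hNdef
      have hvN : v ∉ N := by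
        simp only [hNdef, Finset.mem_filter]
        rintro ⟨-, hrel⟩
        exact G.irrefl (D.adj_of_rel v v hrel)
      have hNT : insert v N ⊆ T := Finset.insert_subset hvT (Finset.filter_subset _ _)
      set T' := T \ insert v N with hT'def
      have hT'card : T'.card = T.card - (N.card + 1) := by
        rw [hT'def, Finset.card_sdiff_of_subset hNT, Finset.card_insert_of_notMem hvN]
      have hNle : N.card + 1 ≤ T.card := by
        rw [← Finset.card_insert_of_notMem hvN]
        exact Finset.card_le_card hNT
      have hT'n : T'.card ≤ n := by omega
      obtain ⟨S', hS'sub, hS'dom, hS'card⟩ := ih T' hT'n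
      refine ⟨insert v S', Finset.insert_subset hvT (hS'sub.trans Finset.sdiff_subset), ?_, ?_⟩
      · intro u hu huS
        by_cases huv : u = v
        · exact absurd (huv ▸ Finset.mem_insert_self v S') huS
        by_cases huN : u ∈ N
        · exact ⟨v, Finset.mem_insert_self v S', (Finset.mem_filter.1 huN).2⟩
        · have huT' : u ∈ T' := by
            rw [hT'def, Finset.mem_sdiff]
            exact ⟨hu, fun h => (Finset.mem_insert.1 h).elim huv huN⟩
          have huS' : u ∉ S' := fun h => huS (Finset.mem_insert_of_mem h)
          obtain ⟨w, hwS', hw⟩ := hS'dom u huT' huS'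
          exact ⟨w, Finset.mem_insert_of_mem hwS', hw⟩
      · -- cardinality bound
        have hcard1 : ((insert v S').card : ℝ) ≤ (S'.card : ℝ) + 1 := by
          have := Finset.card_insert_le v S'
          exact_mod_cast this
        set t' : ℝ := (T'.card : ℝ) with ht'def
        have ht'cast : t' = t - 1 - (N.card : ℝ) := by
          rw [ht'def, hT'card, Nat.cast_sub hNle]
          push_cast
          ring
        -- N is large
        have hdeg' : (F.card : ℝ) ≤ t * (N.card : ℝ) := by
          rw [htdef]; exact_mod_cast hvdeg
        have hNbig : (t - a) / (2 * a) ≤ (N.card : ℝ) := by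
          rw [div_le_iff₀ (by linarith)]
          have h1 : t * (t - a) ≤ 2 * a * (t * (N.card : ℝ)) := by nlinarith
          nlinarith
        have ht'small : t' ≤ t * (1 - 1 / (2 * a)) := by
          rw [ht'cast]
          have : t / (2 * a) - a / (2 * a) ≤ (N.card : ℝ) := by
            rw [← sub_div]; exact hNbig
          have haa : a / (2 * a) = 1 / 2 := by field_simp
          have htt : t * (1 - 1 / (2 * a)) = t - t / (2 * a) := by ring
          rw [htt]
          rw [haa] at this
          linarith
        have hexp : t * (1 - 1 / (2 * a)) ≤ t * Real.exp (-(1 / (2 * a))) := by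
          apply mul_le_mul_of_nonneg_left _ (le_of_lt ht0)
          have := Real.add_one_le_exp (-(1 / (2 * a)))
          linarith
        have hmaxt : max 1 (t / a) = t / a := max_eq_right (by
          rw [le_div_iff₀ ha0]; linarith)
        -- key log inequality
        have hkey : Real.log (max 1 (t' / a)) + 1 / (2 * a) ≤ Real.log (t / a) := by
          by_cases hc : t' / a ≤ 1
          · rw [max_eq_left hc, Real.log_one]
            have h1 : Real.log ((a + 1) / a) ≤ Real.log (t / a) :=
              Real.log_le_log (by positivity) ((div_le_div_iff_of_pos_right ha0).2 hta)
            have h2 := log_lb a ha'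
            linarith
          · push_neg at hc
            rw [max_eq_right hc.le]
            have ht'pos : (0 : ℝ) < t' / a := lt_trans one_pos hc
            have h1 : t' ≤ t * Real.exp (-(1 / (2 * a))) := le_trans ht'small hexp
            have h2 : t' / a ≤ t * Real.exp (-(1 / (2 * a))) / a :=
              (div_le_div_iff_of_pos_right ha0).2 h1
            have h2' : t * Real.exp (-(1 / (2 * a))) / a = (t / a) * Real.exp (-(1 / (2 * a))) := by
              ring
            rw [h2'] at h2
            have h3 : Real.log (t' / a) ≤
                Real.log ((t / a) * Real.exp (-(1 / (2 * a)))) := Real.log_le_log ht'pos h2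
            rw [Real.log_mul (by positivity) (Real.exp_ne_zero _), Real.log_exp] at h3
            linarith
        rw [hmaxt]
        have hstep : 1 ≤ 2 * a * (Real.log (t / a) - Real.log (max 1 (t' / a))) := by
          have h2a : 2 * a * (1 / (2 * a)) = 1 := by field_simp
          have h := mul_le_mul_of_nonneg_left
            (show 1 / (2 * a) ≤ Real.log (t / a) - Real.log (max 1 (t' / a)) by linarith)
            (show (0 : ℝ) ≤ 2 * a by linarith)
          rw [h2a] at h
          linarith
        calc ((insert v S').card : ℝ) ≤ (S'.card : ℝ) + 1 := hcard1
          _ ≤ a * (1 + 2 * Real.log (max 1 (t' / a))) + 1 := by linarith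
          _ ≤ a * (1 + 2 * Real.log (t / a)) := by
              have hexpand : a * (1 + 2 * Real.log (t / a)) -
                  (a * (1 + 2 * Real.log (max 1 (t' / a))) + 1) =
                  2 * a * (Real.log (t / a) - Real.log (max 1 (t' / a))) - 1 := by ring
              linarith [hstep, hexpand]

lemma card_orient_pairs (D : GraphOrientation G) :
    ((Finset.univ ×ˢ Finset.univ).filter fun p : V × V => D.rel p.1 p.2).card
      = Nat.card G.edgeSet := by
  rw [Nat.card_eq_fintype_card, ← SimpleGraph.edgeFinset_card]
  apply Finset.card_bij (fun (p : V × V) _ => s(p.1, p.2))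
  · rintro ⟨u, v⟩ hp
    rw [SimpleGraph.mem_edgeFinset]
    exact D.adj_of_rel u v (Finset.mem_filter.1 hp).2
  · rintro ⟨u, v⟩ hp ⟨u', v'⟩ hp' h
    have hr := (Finset.mem_filter.1 hp).2
    have hr' := (Finset.mem_filter.1 hp').2
    rcases Sym2.eq_iff.1 h with ⟨h1, h2⟩ | ⟨h1, h2⟩
    · simp only at h1 h2; rw [h1, h2]
    · exfalso
      rw [h1, h2] at hr
      exact D.asymm _ _ hr' hr
  · intro e he
    rw [SimpleGraph.mem_edgeFinset] at he
    revert he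
    induction e using Sym2.ind with
    | _ u v =>
      intro he
      rw [SimpleGraph.mem_edgeSet] at he
      rcases D.rel_of_adj u v he with h | h
      · exact ⟨(u, v), Finset.mem_filter.2
          ⟨Finset.mem_product.2 ⟨Finset.mem_univ _, Finset.mem_univ _⟩, h⟩, rfl⟩
      · exact ⟨(v, u), Finset.mem_filter.2
          ⟨Finset.mem_product.2 ⟨Finset.mem_univ _, Finset.mem_univ _⟩, h⟩, Sym2.eq_swap⟩

lemma rhs_nonneg : (0 : ℝ) ≤ (alphaNum G : ℝ) *
    (1 + 2 * Real.log (2 * (Nat.card G.edgeSet : ℝ) / (Fintype.card V : ℝ) + 1)) := by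
  have hx : (0 : ℝ) ≤ 2 * (Nat.card G.edgeSet : ℝ) / (Fintype.card V : ℝ) := by positivity
  have hl := Real.log_nonneg
    (by linarith : (1 : ℝ) ≤ 2 * (Nat.card G.edgeSet : ℝ) / (Fintype.card V : ℝ) + 1)
  exact mul_nonneg (Nat.cast_nonneg _) (by linarith)

lemma dirDom_le (D : GraphOrientation G) :
    (dirDomNum V D.rel : ℝ) ≤ (alphaNum G : ℝ) *
      (1 + 2 * Real.log (2 * (Nat.card G.edgeSet : ℝ) / (Fintype.card V : ℝ) + 1)) := by
  rcases isEmpty_or_nonempty V with hV | hV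
  · have h0 : dirDomNum V D.rel = 0 :=
      Nat.le_zero.1 (Nat.sInf_le ⟨∅, fun u _ => isEmptyElim u, rfl⟩)
    rw [h0, Nat.cast_zero]
    exact rhs_nonneg G
  · obtain ⟨v⟩ := hV
    have ha : 1 ≤ alphaNum G := by
      have hInd : IsIndepFinset G {v} := by
        intro u hu w hw
        simp only [Finset.mem_singleton] at hu hw
        subst hu; subst hw; exact G.irrefl
      have := indep_card_le G {v} hInd
      simpa using this
    have ha' : (1 : ℝ) ≤ (alphaNum G : ℝ) := by exact_mod_cast ha
    have ha0 : (0 : ℝ) < (alphaNum G : ℝ) := by linarith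
    have hn : 0 < Fintype.card V := Fintype.card_pos_iff.2 ⟨v⟩
    have hnR : (0 : ℝ) < (Fintype.card V : ℝ) := by exact_mod_cast hn
    obtain ⟨S, -, hSdom, hScard⟩ :=
      greedy G D ha (Fintype.card V) Finset.univ (le_of_eq Finset.card_univ)
    have hdom : IsDirDomSet D.rel ↑S := fun u hu => by
      obtain ⟨w, hwS, hw⟩ := hSdom u (Finset.mem_univ u) (fun h => hu (Finset.mem_coe.2 h))
      exact ⟨w, Finset.mem_coe.2 hwS, hw⟩
    have h1 : dirDomNum V D.rel ≤ S.card := Nat.sInf_le ⟨S, hdom, rfl⟩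
    have hedge := edge_lower G D.rel D.rel_of_adj (Fintype.card V) Finset.univ
      (le_of_eq Finset.card_univ)
    rw [card_orient_pairs G D] at hedge
    rw [Finset.card_univ] at hedge hScard
    set a : ℝ := (alphaNum G : ℝ) with hadef
    set nR : ℝ := (Fintype.card V : ℝ) with hnRdef
    set m : ℝ := (Nat.card G.edgeSet : ℝ) with hmdef
    have hm0 : (0 : ℝ) ≤ m := Nat.cast_nonneg _
    have hkey : nR / a ≤ 2 * m / nR + 1 := by
      rw [div_le_iff₀ ha0]
      have hh : nR * nR ≤ (2 * m / nR + 1) * a * nR := by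
        have hcan : (2 * m / nR + 1) * a * nR = 2 * m * a + a * nR := by
          field_simp
        rw [hcan]
        nlinarith [hedge]
      exact le_of_mul_le_mul_right hh hnR
    have hlog : Real.log (max 1 (nR / a)) ≤ Real.log (2 * m / nR + 1) := by
      apply Real.log_le_log (lt_of_lt_of_le one_pos (le_max_left _ _))
      apply max_le _ hkey
      have : (0 : ℝ) ≤ 2 * m / nR := by positivity
      linarith
    calc (dirDomNum V D.rel : ℝ) ≤ (S.card : ℝ) := by exact_mod_cast h1
      _ ≤ a * (1 + 2 * Real.log (max 1 (nR / a))) := hScard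
      _ ≤ a * (1 + 2 * Real.log (2 * m / nR + 1)) := by
          apply mul_le_mul_of_nonneg_left (by linarith) (by linarith)

end Stmt8Aux

/-- `Γ_d(G) ≤ α(G)(1 + 2 ln(d_av(G) + 1))` where `d_av(G) = 2m/n`. -/
theorem stmt_8 {V : Type*} [Fintype V] (G : SimpleGraph V) :
    (GammaD G : ℝ) ≤ (alphaNum G : ℝ) *
      (1 + 2 * Real.log
        (2 * (Nat.card G.edgeSet : ℝ) / (Fintype.card V : ℝ) + 1)) := by
  rcases Set.eq_empty_or_nonempty {k | ∃ D : GraphOrientation G, dirDomNum V D.rel = k}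
    with he | hne
  · unfold GammaD
    rw [he]
    have : sSup (∅ : Set ℕ) = 0 := by
      simp
    rw [this, Nat.cast_zero]
    exact Stmt8Aux.rhs_nonneg G
  · have hbdd : BddAbove {k | ∃ D : GraphOrientation G, dirDomNum V D.rel = k} := by
      refine ⟨Fintype.card V, ?_⟩
      rintro k ⟨D, rfl⟩
      have hu : IsDirDomSet D.rel ↑(Finset.univ : Finset V) :=
        fun u hu => absurd (Finset.mem_coe.2 (Finset.mem_univ u)) hu
      have h := Nat.sInf_le (s := {k | ∃ S : Finset V, IsDirDomSet D.rel ↑S ∧ S.card = k})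
        ⟨Finset.univ, hu, rfl⟩
      simpa [dirDomNum, Finset.card_univ] using h
    obtain ⟨D, hD⟩ := Nat.sSup_mem hne hbdd
    unfold GammaD
    rw [← hD]
    exact Stmt8Aux.dirDom_le G D
end

section
/- There exist constants c_1, c_2 > 0 such that for all n, c_1 log n ≤ min over all graphs G on n vertices of (Γ_d(G) + Γ_d(G-bar)) ≤ c_2 (log n)², where G-bar denotes the complement of G. -/
section Basics
variable {V : Type*} [Fintype V]

lemma aux_univ_dom (D : V → V → Prop) : IsDirDomSet D ↑(Finset.univ : Finset V) := by
  intro u hu; exact absurd (Finset.mem_coe.2 (Finset.mem_univ u)) hu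

lemma aux_dirDomNum_le {D : V → V → Prop} {S : Finset V} (h : IsDirDomSet D ↑S) :
    dirDomNum V D ≤ S.card := Nat.sInf_le ⟨S, h, rfl⟩

lemma aux_dirDomNum_le_card (D : V → V → Prop) : dirDomNum V D ≤ Fintype.card V := by
  simpa [Finset.card_univ] using aux_dirDomNum_le (aux_univ_dom D)

lemma aux_dirDomNum_exists (D : V → V → Prop) :
    ∃ S : Finset V, IsDirDomSet D ↑S ∧ S.card = dirDomNum V D := by
  have hne : {k | ∃ S : Finset V, IsDirDomSet D ↑S ∧ S.card = k}.Nonempty :=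
    ⟨Fintype.card V, Finset.univ, aux_univ_dom D, Finset.card_univ⟩
  exact Nat.sInf_mem hne

lemma aux_one_le_dirDomNum [Nonempty V] (D : V → V → Prop) : 1 ≤ dirDomNum V D := by
  obtain ⟨S, hS, hc⟩ := aux_dirDomNum_exists D
  rcases Nat.eq_zero_or_pos (dirDomNum V D) with h0 | h1
  · exfalso
    rw [h0, Finset.card_eq_zero] at hc
    subst hc
    obtain ⟨u⟩ := ‹Nonempty V›
    obtain ⟨v, hv, -⟩ := hS u (by simp)
    simp at hv
  · exact h1

lemma aux_gammaD_bdd (G : SimpleGraph V) :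
    BddAbove {k | ∃ D : GraphOrientation G, dirDomNum V D.rel = k} := by
  refine ⟨Fintype.card V, fun k hk => ?_⟩
  obtain ⟨D, rfl⟩ := hk
  exact aux_dirDomNum_le_card D.rel

lemma aux_le_gammaD (G : SimpleGraph V) (D : GraphOrientation G) :
    dirDomNum V D.rel ≤ GammaD G :=
  le_csSup (aux_gammaD_bdd G) ⟨D, rfl⟩

lemma aux_gammaD_le (G : SimpleGraph V) (K : ℕ)
    (h : ∀ D : GraphOrientation G, dirDomNum V D.rel ≤ K) : GammaD G ≤ K := by
  by_cases hne : {k | ∃ D : GraphOrientation G, dirDomNum V D.rel = k}.Nonempty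
  · exact csSup_le hne (fun k ⟨D, hD⟩ => hD ▸ h D)
  · rw [GammaD, Set.not_nonempty_iff_eq_empty.1 hne, csSup_empty]
    exact Nat.zero_le K

lemma aux_indep_le_alpha {G : SimpleGraph V} {S : Finset V} (h : IsIndepFinset G S) :
    S.card ≤ alphaNum G := by
  refine le_csSup ⟨Fintype.card V, fun k hk => ?_⟩ ⟨S, h, rfl⟩
  obtain ⟨T, -, rfl⟩ := hk
  exact Finset.card_le_univ T

lemma aux_alpha_exists (G : SimpleGraph V) :
    ∃ S : Finset V, IsIndepFinset G S ∧ S.card = alphaNum G := by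
  have : alphaNum G ∈ {k | ∃ S : Finset V, IsIndepFinset G S ∧ S.card = k} := by
    have hne : {k | ∃ S : Finset V, IsIndepFinset G S ∧ S.card = k}.Nonempty :=
      ⟨0, ∅, by intro u hu; simp at hu, rfl⟩
    apply Nat.sSup_mem hne
    refine ⟨Fintype.card V, fun k hk => ?_⟩
    obtain ⟨T, -, rfl⟩ := hk
    exact Finset.card_le_univ T
  exact this

lemma aux_one_le_alpha [Nonempty V] (G : SimpleGraph V) : 1 ≤ alphaNum G := by
  obtain ⟨u⟩ := ‹Nonempty V›
  have : IsIndepFinset G {u} := by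
    intro x hx y hy
    simp only [Finset.mem_singleton] at hx hy
    subst hx; subst hy; simp
  simpa using aux_indep_le_alpha this

end Basics

section Lower
variable {V : Type*} [Fintype V] [LinearOrder V]

/-- Orientation that makes every vertex of the independent set `A` a source. -/
def auxOrient (G : SimpleGraph V) (A : Finset V) (hA : IsIndepFinset G A) :
    GraphOrientation G where
  rel u v := G.Adj u v ∧ (u ∈ A ∨ (u ∉ A ∧ v ∉ A ∧ u < v))
  adj_of_rel u v h := h.1
  rel_of_adj u v h := by
    by_cases hu : u ∈ A
    · exact Or.inl ⟨h, Or.inl hu⟩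
    by_cases hv : v ∈ A
    · exact Or.inr ⟨h.symm, Or.inl hv⟩
    rcases lt_or_gt_of_ne (G.ne_of_adj h) with hlt | hlt
    · exact Or.inl ⟨h, Or.inr ⟨hu, hv, hlt⟩⟩
    · exact Or.inr ⟨h.symm, Or.inr ⟨hv, hu, hlt⟩⟩
  asymm u v h h' := by
    rcases h.2 with hu | ⟨hu, hv, hlt⟩
    · rcases h'.2 with hv | ⟨hv, hu', -⟩
      · exact hA u hu v hv h.1
      · exact hu' hu
    · rcases h'.2 with hv' | ⟨-, -, hlt'⟩
      · exact hv hv'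
      · exact absurd hlt' (not_lt.2 hlt.le)

lemma aux_alpha_le_gammaD (G : SimpleGraph V) : alphaNum G ≤ GammaD G := by
  obtain ⟨A, hA, hcard⟩ := aux_alpha_exists G
  set D := auxOrient G A hA
  refine le_trans ?_ (aux_le_gammaD G D)
  obtain ⟨S, hS, hSc⟩ := aux_dirDomNum_exists D.rel
  rw [← hSc, ← hcard]
  refine Finset.card_le_card (fun a ha => ?_)
  by_contra haS
  obtain ⟨v, hv, hrel⟩ := hS a (by simpa using haS)
  rcases hrel.2 with hvA | ⟨-, haA, -⟩
  · exact hA v hvA a ha hrel.1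
  · exact haA ha

end Lower

section EdgeBound
variable {V : Type*} [Fintype V] [DecidableEq V] {G : SimpleGraph V} [DecidableRel G.Adj]

lemma aux_edge_bound (U : Finset V) : ∀ a : ℕ,
    (∀ T ⊆ U, IsIndepFinset G T → T.card ≤ a) →
    U.card ^ 2 ≤ a * ((∑ v ∈ U, (U.filter (G.Adj v)).card) + U.card) := by
  induction U using Finset.strongInduction with
  | _ U ih =>
    intro a h
    rcases U.eq_empty_or_nonempty with rfl | hne
    · simp
    obtain ⟨v, hvU, hmin⟩ := U.exists_min_image (fun u => (U.filter (G.Adj u)).card) hne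
    set d : ℕ := (U.filter (G.Adj v)).card with hd
    set N : Finset V := insert v (U.filter (G.Adj v)) with hN
    have hNU : N ⊆ U := by
      rw [hN]
      exact Finset.insert_subset hvU (Finset.filter_subset _ _)
    have hvfilt : v ∉ U.filter (G.Adj v) := by simp
    have hNcard : N.card = d + 1 := by
      rw [hN, Finset.card_insert_of_notMem hvfilt]
    set U' : Finset V := U \ N with hU'
    have hU'ss : U' ⊂ U := by
      refine Finset.ssubset_iff_of_subset (Finset.sdiff_subset) |>.2 ⟨v, hvU, ?_⟩
      simp [hU', hN]
    have ha1 : 1 ≤ a := by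
      have : IsIndepFinset G {v} := by
        intro x hx y hy
        simp only [Finset.mem_singleton] at hx hy
        subst hx; subst hy; simp
      simpa using h {v} (by simpa using hvU) this
    -- independent subsets of U' have card ≤ a - 1
    have hindep' : ∀ T ⊆ U', IsIndepFinset G T → T.card ≤ a - 1 := by
      intro T hTU' hT
      have hvT : v ∉ T := fun hvT => by
        have := hTU' hvT
        simp [hU', hN] at this
      have hnadj : ∀ y ∈ T, ¬ G.Adj v y := by
        intro y hy hadj
        have hyU' := hTU' hy
        rw [hU', Finset.mem_sdiff] at hyU'
        exact hyU'.2 (by rw [hN]; exact Finset.mem_insert_of_mem (Finset.mem_filter.2 ⟨hyU'.1, hadj⟩))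
      have hins : IsIndepFinset G (insert v T) := by
        intro x hx y hy hadj
        rcases Finset.mem_insert.1 hx with hxv | hxT
        · rcases Finset.mem_insert.1 hy with hyv | hyT
          · exact G.loopless.irrefl v (by rwa [hxv, hyv] at hadj)
          · exact hnadj y hyT (by rwa [hxv] at hadj)
        · rcases Finset.mem_insert.1 hy with hyv | hyT
          · exact hnadj x hxT (G.symm.symm _ _ (by rwa [hyv] at hadj))
          · exact hT x hxT y hyT hadj
      have hsub : insert v T ⊆ U :=
        Finset.insert_subset hvU (hTU'.trans (Finset.sdiff_subset))
      have := h _ hsub hins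
      rw [Finset.card_insert_of_notMem hvT] at this
      omega
    have hIH := ih U' hU'ss (a - 1) hindep'
    -- sum splitting
    have hsplit : (∑ u ∈ U', (U.filter (G.Adj u)).card) + (∑ u ∈ N, (U.filter (G.Adj u)).card)
        = ∑ u ∈ U, (U.filter (G.Adj u)).card := Finset.sum_sdiff hNU
    have hNsum : (d + 1) * d ≤ ∑ u ∈ N, (U.filter (G.Adj u)).card := by
      calc (d + 1) * d = ∑ _u ∈ N, d := by rw [Finset.sum_const, hNcard, smul_eq_mul]
      _ ≤ _ := Finset.sum_le_sum (fun u hu => hmin u (hNU hu))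
    have hU'sum : (∑ u ∈ U', (U'.filter (G.Adj u)).card) ≤ ∑ u ∈ U', (U.filter (G.Adj u)).card :=
      Finset.sum_le_sum (fun u _ => Finset.card_le_card
        (Finset.filter_subset_filter _ (Finset.sdiff_subset)))
    have hcardU' : U'.card = U.card - (d + 1) := by rw [hU', Finset.card_sdiff_of_subset hNU, hNcard]
    have hdm : d + 1 ≤ U.card := hNcard ▸ Finset.card_le_card hNU
    -- cast to integers and conclude
    set m := U.card
    set m' := U'.card
    set E := ∑ u ∈ U, (U.filter (G.Adj u)).card
    set E' := ∑ u ∈ U', (U'.filter (G.Adj u)).card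
    have hm' : (m' : ℤ) = (m : ℤ) - (d + 1) := by
      rw [hcardU']; push_cast [hdm]; omega
    have hE : (E' : ℤ) + (d + 1) * d ≤ (E : ℤ) := by
      have : E' + (d + 1) * d ≤ E := by
        calc E' + (d+1)*d ≤ (∑ u ∈ U', (U.filter (G.Adj u)).card) + (d+1)*d :=
          Nat.add_le_add_right hU'sum _
        _ ≤ (∑ u ∈ U', (U.filter (G.Adj u)).card) + ∑ u ∈ N, (U.filter (G.Adj u)).card :=
          Nat.add_le_add_left hNsum _
        _ = E := hsplit
      exact_mod_cast this
    have hIHz : (m' : ℤ)^2 ≤ ((a : ℤ) - 1) * (E' + m') := by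
      have := hIH
      have ha : ((a - 1 : ℕ) : ℤ) = (a : ℤ) - 1 := by push_cast [ha1]; ring
      calc (m' : ℤ)^2 = ((m'^2 : ℕ) : ℤ) := by push_cast; ring
      _ ≤ (((a-1) * (E' + m') : ℕ) : ℤ) := by exact_mod_cast this
      _ = ((a:ℤ) - 1) * (E' + m') := by push_cast [ha1]; ring
    have haz : (1 : ℤ) ≤ (a : ℤ) := by exact_mod_cast ha1
    have goalz : (m : ℤ)^2 ≤ (a : ℤ) * ((E:ℤ) + m) := by
      clear_value m m' E E' d N U'
      clear ih h hmin hd hN hNU hvfilt hNcard hU' hU'ss hindep' hsplit hNsum hU'sum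
        hcardU' hIH hne hvU
      have identity : ((a:ℤ)-1)*((a:ℤ)*((E:ℤ)+m) - (m:ℤ)^2) =
          ((m:ℤ) - a*(d+1))^2 + a*(a-1)*((E:ℤ) - E' - ((d:ℤ)+1)*d)
            + a*(((a:ℤ)-1)*((E':ℤ)+m') - (m':ℤ)^2) := by
        rw [hm']; ring
      rcases eq_or_lt_of_le haz with heq | ha2
      · have hIH1 : (m' : ℤ)^2 ≤ 0 := by rw [← heq] at hIHz; linarith
        have hm'0 : (m' : ℤ) = 0 := by
          have := sq_nonneg (m' : ℤ)
          have h2 : (m' : ℤ)^2 = 0 := le_antisymm hIH1 this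
          exact pow_eq_zero_iff (n := 2) (by norm_num) |>.1 h2
        have hmd : (m : ℤ) = (d : ℤ) + 1 := by rw [hm'0] at hm'; linarith
        have hE'0 : (0 : ℤ) ≤ (E' : ℤ) := Int.natCast_nonneg _
        rw [← heq, hmd]
        nlinarith [hE, hmd, hE'0]
      · have t1 : (0:ℤ) ≤ ((m:ℤ) - a*(d+1))^2 := sq_nonneg _
        have t2 : (0:ℤ) ≤ a*(a-1)*((E:ℤ) - E' - ((d:ℤ)+1)*d) :=
          mul_nonneg (mul_nonneg (by linarith) (by linarith)) (by linarith [hE])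
        have t3 : (0:ℤ) ≤ a*(((a:ℤ)-1)*((E':ℤ)+m') - (m':ℤ)^2) :=
          mul_nonneg (by linarith) (by linarith [hIHz])
        have h1 : (0:ℤ) ≤ ((a:ℤ)-1)*((a:ℤ)*((E:ℤ)+m) - (m:ℤ)^2) := by
          rw [identity]; linarith
        nlinarith [h1, ha2]
    exact_mod_cast goalz

end EdgeBound

section Shrink
variable {V : Type*} [Fintype V] [DecidableEq V] {G : SimpleGraph V} [DecidableRel G.Adj]

lemma aux_shrink (D : GraphOrientation G) [DecidableRel D.rel] (a : ℕ)
    (ha : ∀ T : Finset V, IsIndepFinset G T → T.card ≤ a)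
    (U : Finset V) (hne : U.Nonempty) :
    ∃ v ∈ U, U.card ≤ 2 * a * (U.filter (fun u => u = v ∨ D.rel v u)).card := by
  have hEB := aux_edge_bound U a (fun T _ hT => ha T hT)
  set m := U.card with hm
  set E := ∑ v ∈ U, (U.filter (G.Adj v)).card with hE
  set R := ∑ v ∈ U, (U.filter (fun u => D.rel v u)).card with hR
  -- E ≤ 2 * R
  have hpoint : ∀ v ∈ U, (U.filter (G.Adj v)).card ≤
      (U.filter (fun u => D.rel v u)).card + (U.filter (fun u => D.rel u v)).card := by
    intro v _
    have hsub : U.filter (G.Adj v) ⊆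
        (U.filter (fun u => D.rel v u)) ∪ (U.filter (fun u => D.rel u v)) := by
      intro u hu
      rw [Finset.mem_filter] at hu
      rcases D.rel_of_adj v u hu.2 with h | h
      · exact Finset.mem_union_left _ (Finset.mem_filter.2 ⟨hu.1, h⟩)
      · exact Finset.mem_union_right _ (Finset.mem_filter.2 ⟨hu.1, h⟩)
    exact (Finset.card_le_card hsub).trans (Finset.card_union_le _ _)
  have hswap : (∑ v ∈ U, (U.filter (fun u => D.rel u v)).card) = R := by
    rw [hR]
    simp only [Finset.card_filter]
    exact Finset.sum_comm
  have hE2R : E ≤ 2 * R := by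
    calc E ≤ ∑ v ∈ U, ((U.filter (fun u => D.rel v u)).card
        + (U.filter (fun u => D.rel u v)).card) := Finset.sum_le_sum hpoint
    _ = R + ∑ v ∈ U, (U.filter (fun u => D.rel u v)).card := by
        rw [Finset.sum_add_distrib]
    _ = 2 * R := by rw [hswap]; ring
  -- closed out-neighbourhoods
  have hclosed : ∀ v ∈ U, (U.filter (fun u => u = v ∨ D.rel v u)).card
      = (U.filter (fun u => D.rel v u)).card + 1 := by
    intro v hv
    have : U.filter (fun u => u = v ∨ D.rel v u) = insert v (U.filter (fun u => D.rel v u)) := by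
      ext u
      simp only [Finset.mem_filter, Finset.mem_insert]
      constructor
      · rintro ⟨hu, h | h⟩
        · exact Or.inl h
        · exact Or.inr ⟨hu, h⟩
      · rintro (rfl | ⟨hu, h⟩)
        · exact ⟨hv, Or.inl rfl⟩
        · exact ⟨hu, Or.inr h⟩
    rw [this, Finset.card_insert_of_notMem (by
      simp only [Finset.mem_filter, not_and]
      exact fun _ h => (D.asymm v v h) h), Nat.add_comm]
  -- pick the max
  obtain ⟨v, hv, hmax⟩ := U.exists_max_image
    (fun v => (U.filter (fun u => u = v ∨ D.rel v u)).card) hne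
  refine ⟨v, hv, ?_⟩
  set c := (U.filter (fun u => u = v ∨ D.rel v u)).card with hc
  have hsum2 : ∑ w ∈ U, (U.filter (fun u => u = w ∨ D.rel w u)).card = R + m := by
    rw [hR, hm, Finset.card_eq_sum_ones U, ← Finset.sum_add_distrib]
    exact Finset.sum_congr rfl (fun w hw => hclosed w hw)
  have hsum : R + m ≤ m * c := by
    rw [← hsum2]
    simpa using Finset.sum_le_card_nsmul U _ c (fun w hw => hmax w hw)
  have hm2 : m * m ≤ m * (2 * a * c) := by
    calc m * m = m^2 := by ring
    _ ≤ a * (E + m) := hEB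
    _ ≤ a * (2 * R + m) := by
        exact Nat.mul_le_mul_left a (Nat.add_le_add_right hE2R m)
    _ ≤ 2 * a * (R + m) := by ring_nf; omega
    _ ≤ 2 * a * (m * c) := Nat.mul_le_mul_left _ hsum
    _ = m * (2 * a * c) := by ring
  have hm0 : 0 < m := Finset.card_pos.2 hne
  exact Nat.le_of_mul_le_mul_left hm2 hm0

lemma aux_greedy (D : GraphOrientation G) [DecidableRel D.rel] (a : ℕ) (ha1 : 1 ≤ a)
    (ha : ∀ T : Finset V, IsIndepFinset G T → T.card ≤ a) :
    ∀ k : ℕ, ∀ U : Finset V, (U.card : ℝ) < ((1 - 1/(2*(a:ℝ)))⁻¹)^k →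
    ∃ S : Finset V, S ⊆ U ∧ S.card ≤ k ∧ ∀ u ∈ U, u ∈ S ∨ ∃ v ∈ S, D.rel v u := by
  have ha0 : (0:ℝ) < (a:ℝ) := by exact_mod_cast ha1
  have ha1r : (1:ℝ) ≤ (a:ℝ) := by exact_mod_cast ha1
  have hβ : (0:ℝ) < 1 - 1/(2*(a:ℝ)) := by
    have h2a : (2:ℝ) ≤ 2*(a:ℝ) := by linarith
    have := one_div_le_one_div_of_le (by norm_num : (0:ℝ) < 2) h2a
    linarith
  intro k
  induction k with
  | zero =>
    intro U hU
    refine ⟨∅, Finset.empty_subset _, le_refl _, fun u hu => ?_⟩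
    exfalso
    simp only [pow_zero] at hU
    have : (1:ℝ) ≤ U.card := by
      have : 1 ≤ U.card := Finset.card_pos.2 ⟨u, hu⟩
      exact_mod_cast this
    linarith
  | succ k ih =>
    intro U hU
    rcases U.eq_empty_or_nonempty with rfl | hne
    · exact ⟨∅, Finset.empty_subset _, Nat.zero_le _, fun u hu => by simp at hu⟩
    obtain ⟨v, hv, hshrink⟩ := aux_shrink D a ha U hne
    set C := U.filter (fun u => u = v ∨ D.rel v u) with hC
    set U' := U \ C with hU'
    have hCU : C ⊆ U := Finset.filter_subset _ _
    have hcard' : (U'.card : ℝ) ≤ U.card * (1 - 1/(2*(a:ℝ))) := by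
      have h1 : U'.card = U.card - C.card := Finset.card_sdiff_of_subset hCU
      have h2 : C.card ≤ U.card := Finset.card_le_card hCU
      have h3 : (U.card : ℝ) ≤ 2 * a * C.card := by exact_mod_cast hshrink
      have h4 : (U'.card : ℝ) = (U.card : ℝ) - C.card := by
        rw [h1]; push_cast [h2]; ring
      rw [h4]
      have : (U.card : ℝ)/(2*(a:ℝ)) ≤ C.card := by
        rw [div_le_iff₀ (by positivity)]
        nlinarith
      have expand : (U.card : ℝ) * (1 - 1/(2*(a:ℝ))) = U.card - U.card/(2*a) := by
        field_simp
      rw [expand]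
      linarith
    have hlt : (U'.card : ℝ) < ((1 - 1/(2*(a:ℝ)))⁻¹)^k := by
      have hr : ((1 - 1/(2*(a:ℝ)))⁻¹)^(k+1) * (1 - 1/(2*(a:ℝ))) = ((1 - 1/(2*(a:ℝ)))⁻¹)^k := by
        rw [pow_succ, mul_assoc, inv_mul_cancel₀ (ne_of_gt hβ), mul_one]
      calc (U'.card : ℝ) ≤ U.card * (1 - 1/(2*(a:ℝ))) := hcard'
      _ < ((1 - 1/(2*(a:ℝ)))⁻¹)^(k+1) * (1 - 1/(2*(a:ℝ))) := by
          exact mul_lt_mul_of_pos_right hU hβ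
      _ = _ := hr
    obtain ⟨S', hS'U, hS'card, hS'dom⟩ := ih U' hlt
    refine ⟨insert v S', Finset.insert_subset hv (hS'U.trans Finset.sdiff_subset),
      (Finset.card_insert_le _ _).trans (Nat.succ_le_succ hS'card), fun u hu => ?_⟩
    by_cases huC : u ∈ C
    · rw [hC, Finset.mem_filter] at huC
      rcases huC.2 with rfl | hrel
      · exact Or.inl (Finset.mem_insert_self _ _)
      · exact Or.inr ⟨v, Finset.mem_insert_self _ _, hrel⟩
    · have hu' : u ∈ U' := Finset.mem_sdiff.2 ⟨hu, huC⟩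
      rcases hS'dom u hu' with h | ⟨w, hw, hrel⟩
      · exact Or.inl (Finset.mem_insert_of_mem h)
      · exact Or.inr ⟨w, Finset.mem_insert_of_mem hw, hrel⟩

end Shrink

section DomUB
variable {V : Type*} [Fintype V] [DecidableEq V] {G : SimpleGraph V} [DecidableRel G.Adj]

lemma aux_dirDomNum_le_bound (D : GraphOrientation G) [DecidableRel D.rel] (a : ℕ)
    (ha1 : 1 ≤ a) (ha : ∀ T : Finset V, IsIndepFinset G T → T.card ≤ a) :
    dirDomNum V D.rel ≤ ⌈2*(a:ℝ)*Real.log (Fintype.card V)⌉₊ + 1 := by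
  set n := Fintype.card V with hn
  set k := ⌈2*(a:ℝ)*Real.log n⌉₊ + 1 with hk
  have ha0 : (0:ℝ) < (a:ℝ) := by exact_mod_cast ha1
  have ha1r : (1:ℝ) ≤ (a:ℝ) := by exact_mod_cast ha1
  set β : ℝ := 1/(2*(a:ℝ)) with hβdef
  have hβpos : 0 < β := by positivity
  have hβlt : β < 1 := by
    rw [hβdef, div_lt_one (by positivity)]
    linarith
  have h1β : 0 < 1 - β := by linarith
  have hmain : ((Finset.univ : Finset V).card : ℝ) < ((1 - β)⁻¹)^k := by
    rw [Finset.card_univ, ← hn]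
    have hrpos : (0:ℝ) < ((1 - β)⁻¹)^k := by positivity
    rcases Nat.eq_zero_or_pos n with h0 | hpos
    · rw [h0]; exact_mod_cast hrpos
    have hnr : (1:ℝ) ≤ (n:ℝ) := by exact_mod_cast hpos
    -- (1-β)^k * n < 1
    have hlogk : Real.log n < β * k := by
      have hceil : 2*(a:ℝ)*Real.log n ≤ (⌈2*(a:ℝ)*Real.log n⌉₊ : ℝ) := Nat.le_ceil _
      have hkval : (k:ℝ) = (⌈2*(a:ℝ)*Real.log n⌉₊ : ℝ) + 1 := by rw [hk]; push_cast; ring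
      have : 2*(a:ℝ)*Real.log n + 1 ≤ (k:ℝ) := by rw [hkval]; linarith
      have hβk : β * (k:ℝ) = (k:ℝ)/(2*(a:ℝ)) := by rw [hβdef]; ring
      rw [hβk]
      rw [lt_div_iff₀ (by positivity)]
      nlinarith
    have hexp : (1 - β)^k ≤ Real.exp (-(β * k)) := by
      have h1 : 1 - β ≤ Real.exp (-β) := by
        have := Real.add_one_le_exp (-β)
        linarith
      calc (1 - β)^k ≤ (Real.exp (-β))^k := pow_le_pow_left₀ (le_of_lt h1β) h1 k
      _ = Real.exp (-(β * k)) := by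
          rw [← Real.exp_nat_mul]
          congr 1
          ring
    have hlt : (n:ℝ) < Real.exp (β * k) := by
      have h5 : (n:ℝ) = Real.exp (Real.log n) := (Real.exp_log (by positivity)).symm
      rw [h5]
      exact Real.exp_lt_exp.2 hlogk
    have hkey : (1 - β)^k * n < 1 := by
      have s1 : (1 - β)^k * n ≤ Real.exp (-(β * k)) * n :=
        mul_le_mul_of_nonneg_right hexp (by positivity)
      have s2 : Real.exp (-(β * k)) * n < Real.exp (-(β * k)) * Real.exp (β * k) :=
        mul_lt_mul_of_pos_left hlt (Real.exp_pos _)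
      have s3 : Real.exp (-(β * (k:ℝ))) * Real.exp (β * k) = 1 := by
        rw [← Real.exp_add]; simp
      linarith
    rw [inv_pow, ← one_div, lt_div_iff₀ (by positivity)]
    linarith
  obtain ⟨S, -, hScard, hSdom⟩ := aux_greedy D a ha1 ha k Finset.univ hmain
  have hdom : IsDirDomSet D.rel ↑S := by
    intro u hu
    rcases hSdom u (Finset.mem_univ u) with h | ⟨v, hv, hrel⟩
    · exact absurd (Finset.mem_coe.2 h) hu
    · exact ⟨v, Finset.mem_coe.2 hv, hrel⟩
  exact (aux_dirDomNum_le hdom).trans hScard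

lemma aux_gammaD_le_real [Nonempty V] (G : SimpleGraph V) [DecidableRel G.Adj] (a : ℕ)
    (ha1 : 1 ≤ a) (ha : ∀ T : Finset V, IsIndepFinset G T → T.card ≤ a) :
    (GammaD G : ℝ) ≤ 2*(a:ℝ)*Real.log (Fintype.card V) + 2 := by
  have hlogn : 0 ≤ Real.log (Fintype.card V) := by
    apply Real.log_nonneg
    have : 1 ≤ Fintype.card V := Fintype.card_pos
    exact_mod_cast this
  have ha0 : (0:ℝ) ≤ (a:ℝ) := by positivity
  have hK : GammaD G ≤ ⌈2*(a:ℝ)*Real.log (Fintype.card V)⌉₊ + 1 := by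
    apply aux_gammaD_le
    intro D
    letI := Classical.decRel D.rel
    exact aux_dirDomNum_le_bound D a ha1 ha
  have hKr : (GammaD G : ℝ) ≤ (⌈2*(a:ℝ)*Real.log (Fintype.card V)⌉₊ : ℝ) + 1 := by
    exact_mod_cast hK
  have hceil : (⌈2*(a:ℝ)*Real.log (Fintype.card V)⌉₊ : ℝ) < 2*(a:ℝ)*Real.log (Fintype.card V) + 1 :=
    Nat.ceil_lt_add_one (by positivity)
  linarith

end DomUB

section Ramsey
variable {V : Type*} [DecidableEq V]

lemma aux_ramsey (G : SimpleGraph V) [DecidableRel G.Adj] :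
    ∀ (c a b : ℕ), a + b ≤ c → ∀ s : Finset V, 2^(a+b) ≤ s.card →
    (∃ t ⊆ s, IsIndepFinset G t ∧ t.card = a) ∨
    (∃ t ⊆ s, IsIndepFinset Gᶜ t ∧ t.card = b) := by
  intro c
  induction c with
  | zero =>
    intro a b hab s _
    have ha : a = 0 := by omega
    exact Or.inl ⟨∅, Finset.empty_subset _, fun u hu => by simp at hu, by simp [ha]⟩
  | succ c ih =>
    intro a b hab s hs
    match a, b with
    | 0, b => exact Or.inl ⟨∅, Finset.empty_subset _, fun u hu => by simp at hu, by simp⟩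
    | a+1, 0 => exact Or.inr ⟨∅, Finset.empty_subset _, fun u hu => by simp at hu, by simp⟩
    | a'+1, b'+1 =>
      have hsne : s.Nonempty := by
        rw [← Finset.card_pos]
        calc 0 < 2^(a'+1+(b'+1)) := Nat.pow_pos (by norm_num)
        _ ≤ s.card := hs
      obtain ⟨v, hv⟩ := hsne
      set N := (s.erase v).filter (G.Adj v) with hN
      set M := (s.erase v).filter (fun u => ¬ G.Adj v u) with hM
      have hNM : N.card + M.card = s.card - 1 := by
        rw [hN, hM, Finset.card_filter_add_card_filter_not,
          Finset.card_erase_of_mem hv]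
      have hpow : 2^(a'+1+(b'+1)) = 2^(a'+b'+1) + 2^(a'+b'+1) := by
        have : a'+1+(b'+1) = (a'+b'+1)+1 := by ring
        rw [this, pow_succ]
        ring
      have hcases : 2^(a'+b'+1) ≤ N.card ∨ 2^(a'+b'+1) ≤ M.card := by
        by_contra hcon
        push_neg at hcon
        have h1 : 1 ≤ s.card := Finset.card_pos.2 ⟨v, hv⟩
        omega
      have hNs : N ⊆ s := (Finset.filter_subset _ _).trans (Finset.erase_subset _ _)
      have hMs : M ⊆ s := (Finset.filter_subset _ _).trans (Finset.erase_subset _ _)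
      rcases hcases with hbig | hbig
      · -- recurse on neighbours with (a'+1, b')
        have hrec := ih (a'+1) b' (by omega) N (by
          have : a'+1+b' = a'+b'+1 := by ring
          rw [this]; exact hbig)
        rcases hrec with ⟨t, hts, hind, hcard⟩ | ⟨t, hts, hclq, hcard⟩
        · exact Or.inl ⟨t, hts.trans hNs, hind, hcard⟩
        · refine Or.inr ⟨insert v t, Finset.insert_subset hv (hts.trans hNs), ?_, ?_⟩
          · intro x hx y hy hadj
            rcases Finset.mem_insert.1 hx with hxv | hxt
            · rcases Finset.mem_insert.1 hy with hyv | hyt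
              · exact Gᶜ.loopless.irrefl v (by rwa [hxv, hyv] at hadj)
              · have hyN := hts hyt
                rw [hN, Finset.mem_filter] at hyN
                rw [hxv] at hadj
                exact ((SimpleGraph.compl_adj _ _ _).1 hadj).2 hyN.2
            · rcases Finset.mem_insert.1 hy with hyv | hyt
              · have hxN := hts hxt
                rw [hN, Finset.mem_filter] at hxN
                rw [hyv] at hadj
                exact ((SimpleGraph.compl_adj _ _ _).1 hadj).2 hxN.2.symm
              · exact hclq x hxt y hyt hadj
          · have hvt : v ∉ t := fun hvt => by
              have := hts hvt
              rw [hN, Finset.mem_filter] at this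
              exact (Finset.notMem_erase v s) this.1
            rw [Finset.card_insert_of_notMem hvt, hcard]
      · -- recurse on non-neighbours with (a', b'+1)
        have hrec := ih a' (b'+1) (by omega) M (by
          have : a'+(b'+1) = a'+b'+1 := by ring
          rw [this]; exact hbig)
        rcases hrec with ⟨t, hts, hind, hcard⟩ | ⟨t, hts, hclq, hcard⟩
        · refine Or.inl ⟨insert v t, Finset.insert_subset hv (hts.trans hMs), ?_, ?_⟩
          · intro x hx y hy hadj
            rcases Finset.mem_insert.1 hx with hxv | hxt
            · rcases Finset.mem_insert.1 hy with hyv | hyt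
              · exact G.loopless.irrefl v (by rwa [hxv, hyv] at hadj)
              · have hyM := hts hyt
                rw [hM, Finset.mem_filter] at hyM
                rw [hxv] at hadj
                exact hyM.2 hadj
            · rcases Finset.mem_insert.1 hy with hyv | hyt
              · have hxM := hts hxt
                rw [hM, Finset.mem_filter] at hxM
                rw [hyv] at hadj
                exact hxM.2 hadj.symm
              · exact hind x hxt y hyt hadj
          · have hvt : v ∉ t := fun hvt => by
              have := hts hvt
              rw [hM, Finset.mem_filter] at this
              exact (Finset.notMem_erase v s) this.1
            rw [Finset.card_insert_of_notMem hvt, hcard]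
        · exact Or.inr ⟨t, hts.trans hMs, hclq, hcard⟩

lemma aux_ramsey_alpha [Fintype V] (G : SimpleGraph V) (k : ℕ)
    (h : 2^(k+k) ≤ Fintype.card V) :
    k ≤ alphaNum G ∨ k ≤ alphaNum Gᶜ := by
  classical
  have := aux_ramsey G (k+k) k k (le_refl _) Finset.univ (by
    rwa [Finset.card_univ])
  rcases this with ⟨t, -, hind, hcard⟩ | ⟨t, -, hind, hcard⟩
  · exact Or.inl (hcard ▸ aux_indep_le_alpha hind)
  · exact Or.inr (hcard ▸ aux_indep_le_alpha hind)

end Ramsey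

section Counting
variable {V : Type*} [Fintype V] [DecidableEq V]

/-- all non-diagonal unordered pairs within `S` -/
def auxPairs (S : Finset V) : Finset (Sym2 V) := S.sym2.filter (fun e => ¬ e.IsDiag)

lemma aux_mem_pairs {S : Finset V} {u v : V} :
    s(u,v) ∈ auxPairs S ↔ u ∈ S ∧ v ∈ S ∧ u ≠ v := by
  simp [auxPairs, Finset.mk_mem_sym2_iff, Sym2.mk_isDiag_iff, and_assoc]

lemma aux_card_pairs (S : Finset V) : (auxPairs S).card = S.card.choose 2 := by
  have hsplit : (S.sym2.filter (fun e => e.IsDiag)).card + (auxPairs S).card = S.sym2.card := by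
    rw [auxPairs, Finset.card_filter_add_card_filter_not]
  have hdiag : S.sym2.filter (fun e => e.IsDiag) = S.image (fun a => s(a,a)) := by
    ext e
    induction e with
    | _ x y =>
      simp only [Finset.mem_filter, Finset.mk_mem_sym2_iff, Sym2.mk_isDiag_iff, Finset.mem_image]
      constructor
      · rintro ⟨⟨hx, -⟩, rfl⟩
        exact ⟨x, hx, rfl⟩
      · rintro ⟨a, ha, h⟩
        rw [Sym2.eq_iff] at h
        have h1 : a = x ∧ a = y := by tauto
        obtain ⟨rfl, h2⟩ := h1
        subst h2
        exact ⟨⟨ha, ha⟩, rfl⟩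
  have hdiagcard : (S.sym2.filter (fun e => e.IsDiag)).card = S.card := by
    rw [hdiag]
    apply Finset.card_image_of_injective
    intro a b hab
    exact Sym2.diag_injective hab
  have hsym2 : S.sym2.card = (S.card + 1).choose 2 := Finset.card_sym2 S
  have hpascal : (S.card + 1).choose 2 = S.card + S.card.choose 2 := by
    rw [Nat.choose_succ_succ]
    simp [Nat.choose_one_right]
  omega

lemma aux_pairs_subset (S : Finset V) :
    auxPairs S ⊆ Finset.univ.filter (fun e : Sym2 V => ¬ e.IsDiag) := by
  intro e he
  rw [auxPairs, Finset.mem_filter] at he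
  exact Finset.mem_filter.2 ⟨Finset.mem_univ _, he.2⟩

lemma aux_good_set_exists (k : ℕ)
    (hnum : (Fintype.card V).choose k * 2 < 2^(k.choose 2)) :
    ∃ A : Finset (Sym2 V), ∀ S : Finset V, S.card = k →
      (∃ e ∈ auxPairs S, e ∈ A) ∧ (∃ e ∈ auxPairs S, e ∉ A) := by
  classical
  set allE : Finset (Sym2 V) := Finset.univ.filter (fun e : Sym2 V => ¬ e.IsDiag) with hallE
  set T := allE.powerset with hT
  set B := T.filter (fun A => ∃ S : Finset V, S.card = k ∧
    (auxPairs S ⊆ A ∨ A ∩ auxPairs S = ∅)) with hB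
  have hbadcard : ∀ S : Finset V, S.card = k →
      (T.filter (fun A => auxPairs S ⊆ A ∨ A ∩ auxPairs S = ∅)).card
        ≤ 2 * 2^(allE.card - k.choose 2) := by
    intro S hS
    set P := auxPairs S with hP
    have hPallE : P ⊆ allE := aux_pairs_subset S
    have hPcard : P.card = k.choose 2 := by rw [hP, aux_card_pairs, hS]
    have hsub : T.filter (fun A => auxPairs S ⊆ A ∨ A ∩ auxPairs S = ∅)
        ⊆ (T.filter (fun A => auxPairs S ⊆ A)) ∪ (T.filter (fun A => A ∩ auxPairs S = ∅)) := by
      intro A hA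
      rw [Finset.mem_filter] at hA
      rcases hA.2 with h | h
      · exact Finset.mem_union_left _ (Finset.mem_filter.2 ⟨hA.1, h⟩)
      · exact Finset.mem_union_right _ (Finset.mem_filter.2 ⟨hA.1, h⟩)
    have h1 : (T.filter (fun A => auxPairs S ⊆ A)).card ≤ 2^(allE.card - k.choose 2) := by
      have hinj : ∀ A ∈ T.filter (fun A => auxPairs S ⊆ A),
          A \ P ∈ (allE \ P).powerset := by
        intro A hA
        rw [Finset.mem_filter, Finset.mem_powerset] at hA
        rw [Finset.mem_powerset]
        exact Finset.sdiff_subset_sdiff hA.1 (le_refl _)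
      have hinj2 : ∀ A ∈ T.filter (fun A => auxPairs S ⊆ A),
          ∀ A' ∈ T.filter (fun A => auxPairs S ⊆ A), A \ P = A' \ P → A = A' := by
        intro A hA A' hA' h
        rw [Finset.mem_filter] at hA hA'
        have e1 : A = (A \ P) ∪ P := by
          rw [Finset.sdiff_union_self_eq_union, Finset.union_eq_left.2 hA.2]
        have e2 : A' = (A' \ P) ∪ P := by
          rw [Finset.sdiff_union_self_eq_union, Finset.union_eq_left.2 hA'.2]
        rw [e1, e2, h]
      calc (T.filter (fun A => auxPairs S ⊆ A)).card ≤ (allE \ P).powerset.card :=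
        Finset.card_le_card_of_injOn _ hinj hinj2
      _ = 2^(allE.card - k.choose 2) := by
          rw [Finset.card_powerset, Finset.card_sdiff_of_subset hPallE, hPcard]
    have h2 : (T.filter (fun A => A ∩ auxPairs S = ∅)).card ≤ 2^(allE.card - k.choose 2) := by
      have hsub2 : T.filter (fun A => A ∩ auxPairs S = ∅) ⊆ (allE \ P).powerset := by
        intro A hA
        rw [Finset.mem_filter, Finset.mem_powerset] at hA
        rw [Finset.mem_powerset]
        intro e he
        rw [Finset.mem_sdiff]
        refine ⟨hA.1 he, fun heP => ?_⟩
        have : e ∈ A ∩ P := Finset.mem_inter.2 ⟨he, heP⟩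
        rw [hA.2] at this
        simp at this
      calc (T.filter (fun A => A ∩ auxPairs S = ∅)).card ≤ (allE \ P).powerset.card :=
        Finset.card_le_card hsub2
      _ = 2^(allE.card - k.choose 2) := by
          rw [Finset.card_powerset, Finset.card_sdiff_of_subset hPallE, hPcard]
    calc (T.filter (fun A => auxPairs S ⊆ A ∨ A ∩ auxPairs S = ∅)).card
        ≤ _ := Finset.card_le_card hsub
      _ ≤ _ := Finset.card_union_le _ _
      _ ≤ 2 * 2^(allE.card - k.choose 2) := by omega
  have hBsub : B ⊆ (Finset.univ.powersetCard k).biUnion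
      (fun S => T.filter (fun A => auxPairs S ⊆ A ∨ A ∩ auxPairs S = ∅)) := by
    intro A hA
    rw [hB, Finset.mem_filter] at hA
    obtain ⟨hAT, S, hScard, hSbad⟩ := hA
    exact Finset.mem_biUnion.2 ⟨S, Finset.mem_powersetCard.2 ⟨Finset.subset_univ _, hScard⟩,
      Finset.mem_filter.2 ⟨hAT, hSbad⟩⟩
  have hBcard : B.card < T.card := by
    have hTcard : T.card = 2^allE.card := by rw [hT, Finset.card_powerset]
    have step1 : B.card ≤ (Finset.univ.powersetCard k : Finset (Finset V)).card
        * (2 * 2^(allE.card - k.choose 2)) := by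
      have s1 := Finset.card_le_card hBsub
      have s2 : ((Finset.univ.powersetCard k : Finset (Finset V)).biUnion
          (fun S => T.filter (fun A => auxPairs S ⊆ A ∨ A ∩ auxPairs S = ∅))).card
          ≤ ∑ S ∈ (Finset.univ.powersetCard k : Finset (Finset V)),
            (T.filter (fun A => auxPairs S ⊆ A ∨ A ∩ auxPairs S = ∅)).card :=
        Finset.card_biUnion_le
      have s3 : ∑ S ∈ (Finset.univ.powersetCard k : Finset (Finset V)),
            (T.filter (fun A => auxPairs S ⊆ A ∨ A ∩ auxPairs S = ∅)).card
          ≤ (Finset.univ.powersetCard k : Finset (Finset V)).card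
            * (2 * 2^(allE.card - k.choose 2)) := by
        simpa only [smul_eq_mul] using Finset.sum_le_card_nsmul _ _ _
          (fun S hS => hbadcard S (Finset.mem_powersetCard.1 hS).2)
      omega
    have hpsc : (Finset.univ.powersetCard k : Finset (Finset V)).card = (Fintype.card V).choose k := by
      rw [Finset.card_powersetCard, Finset.card_univ]
    rcases le_or_gt k (Fintype.card V) with hkn | hkn
    · -- there is a set of size k, so k.choose 2 ≤ allE.card
      obtain ⟨S, -, hScard⟩ := Finset.exists_subset_card_eq
        (s := (Finset.univ : Finset V)) (n := k) (by rwa [Finset.card_univ])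
      have hle : k.choose 2 ≤ allE.card := by
        have h := Finset.card_le_card (aux_pairs_subset S)
        rw [aux_card_pairs, hScard] at h
        rw [hallE]
        exact h
      have key : (Fintype.card V).choose k * (2 * 2^(allE.card - k.choose 2)) < 2^allE.card := by
        have hsplitpow : 2^allE.card = 2^(k.choose 2) * 2^(allE.card - k.choose 2) := by
          rw [← pow_add]
          congr 1
          omega
        rw [hsplitpow]
        have hp : 0 < 2^(allE.card - k.choose 2) := Nat.pow_pos (by norm_num)
        calc (Fintype.card V).choose k * (2 * 2^(allE.card - k.choose 2))
            = ((Fintype.card V).choose k * 2) * 2^(allE.card - k.choose 2) := by ring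
          _ < 2^(k.choose 2) * 2^(allE.card - k.choose 2) :=
            (Nat.mul_lt_mul_right hp).2 hnum
      rw [hTcard]
      calc B.card ≤ _ := step1
      _ = (Fintype.card V).choose k * (2 * 2^(allE.card - k.choose 2)) := by rw [hpsc]
      _ < 2^allE.card := key
    · -- no sets of size k at all
      have hz : (Finset.univ.powersetCard k : Finset (Finset V)).card = 0 := by
        rw [hpsc, Nat.choose_eq_zero_of_lt hkn]
      rw [hz, Nat.zero_mul, Nat.le_zero] at step1
      rw [hTcard, step1]
      exact Nat.pow_pos (by norm_num)
  obtain ⟨A, hAT, hAB⟩ : ∃ A ∈ T, A ∉ B := by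
    by_contra hcon
    push_neg at hcon
    exact absurd (Finset.card_le_card hcon) (Nat.not_le.2 hBcard)
  refine ⟨A, fun S hS => ?_⟩
  rw [hB, Finset.mem_filter] at hAB
  push_neg at hAB
  have := hAB hAT S hS
  constructor
  · by_contra hcon
    push_neg at hcon
    apply Finset.nonempty_iff_ne_empty.1 this.2
    rw [Finset.eq_empty_iff_forall_notMem]
    intro e he
    rw [Finset.mem_inter] at he
    exact hcon e he.2 he.1
  · by_contra hcon
    push_neg at hcon
    exact this.1 (fun e he => hcon e he)

end Counting

section RamseyGraph
variable {V : Type*} [Fintype V] [DecidableEq V]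

lemma aux_ramsey_graph (k : ℕ)
    (hnum : (Fintype.card V).choose k * 2 < 2^(k.choose 2)) :
    ∃ G : SimpleGraph V, (∀ S : Finset V, IsIndepFinset G S → S.card < k) ∧
      (∀ S : Finset V, IsIndepFinset Gᶜ S → S.card < k) := by
  classical
  obtain ⟨A, hA⟩ := aux_good_set_exists k hnum
  refine ⟨SimpleGraph.fromEdgeSet ↑A, ?_, ?_⟩
  · intro S hS
    by_contra hcon
    push_neg at hcon
    obtain ⟨S', hS'S, hS'card⟩ := Finset.exists_subset_card_eq hcon
    obtain ⟨e, he1, he2⟩ := (hA S' hS'card).1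
    revert he1 he2
    induction e using Sym2.inductionOn with
    | hf x y =>
      intro he1 he2
      rw [aux_mem_pairs] at he1
      obtain ⟨hx, hy, hxy⟩ := he1
      have hadj : (SimpleGraph.fromEdgeSet (↑A : Set (Sym2 V))).Adj x y :=
        (SimpleGraph.fromEdgeSet_adj _).2 ⟨Finset.mem_coe.2 he2, hxy⟩
      exact hS x (hS'S hx) y (hS'S hy) hadj
  · intro S hS
    by_contra hcon
    push_neg at hcon
    obtain ⟨S', hS'S, hS'card⟩ := Finset.exists_subset_card_eq hcon
    obtain ⟨e, he1, he2⟩ := (hA S' hS'card).2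
    revert he1 he2
    induction e using Sym2.inductionOn with
    | hf x y =>
      intro he1 he2
      rw [aux_mem_pairs] at he1
      obtain ⟨hx, hy, hxy⟩ := he1
      have hnadj : ¬ (SimpleGraph.fromEdgeSet (↑A : Set (Sym2 V))).Adj x y := by
        intro hadj
        exact he2 (Finset.mem_coe.1 ((SimpleGraph.fromEdgeSet_adj _).1 hadj).1)
      have hadj : (SimpleGraph.fromEdgeSet (↑A : Set (Sym2 V)))ᶜ.Adj x y :=
        (SimpleGraph.compl_adj _ _ _).2 ⟨hxy, hnadj⟩
      exact hS x (hS'S hx) y (hS'S hy) hadj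

end RamseyGraph

section Numerics

lemma aux_one_le_L {n : ℕ} (hn : 2 ≤ n) : 1 ≤ Real.logb 2 n := by
  have hn0 : (0:ℝ) < (n:ℝ) := by positivity
  rw [Real.le_logb_iff_rpow_le (by norm_num) hn0]
  rw [Real.rpow_one]
  exact_mod_cast hn

lemma aux_numeric (n : ℕ) (hn : 2 ≤ n) :
    n.choose (⌈2 * Real.logb 2 n⌉₊ + 2) * 2 < 2^((⌈2 * Real.logb 2 n⌉₊ + 2).choose 2) := by
  set L := Real.logb 2 n with hLdef
  have hL1 : 1 ≤ L := aux_one_le_L hn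
  set k := ⌈2*L⌉₊ + 2 with hk
  have hk4 : 4 ≤ k := by
    have h2 : (2:ℝ) ≤ 2*L := by linarith
    have : (1:ℕ) < ⌈2*L⌉₊ := Nat.lt_ceil.2 (by push_cast; linarith)
    omega
  have hkL : 2*L + 2 ≤ (k:ℝ) := by
    have := Nat.le_ceil (2*L)
    rw [hk]
    push_cast
    linarith
  -- k.choose 2 vs k*(k-1)/2 : use 2 * k.choose 2 = k * (k-1)
  have hc2 : 2 * k.choose 2 = k * (k-1) := by
    rw [Nat.choose_two_right]
    have hev : 2 ∣ k * (k-1) := by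
      rcases Nat.even_or_odd k with he | ho
      · exact Dvd.dvd.mul_right he.two_dvd _
      · have : Even (k-1) := by
          rcases ho with ⟨m, hm⟩
          exact ⟨m, by omega⟩
        exact Dvd.dvd.mul_left this.two_dvd _
      
    omega
  -- real inequality : L*k + 1 < k.choose 2
  have hmain : L * k + 1 < (k.choose 2 : ℝ) := by
    have h1k : 1 ≤ k := by omega
    have hcast : ((k * (k-1) : ℕ) : ℝ) = (k:ℝ) * ((k:ℝ) - 1) := by
      have hsub : ((k - 1 : ℕ):ℝ) = (k:ℝ) - 1 := by
        rw [Nat.cast_sub h1k]; norm_num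
      rw [Nat.cast_mul, hsub]
    have h2c : (2:ℝ) * (k.choose 2 : ℝ) = (k:ℝ) * ((k:ℝ) - 1) := by
      rw [← hcast]; exact_mod_cast hc2
    have hk4r : (4:ℝ) ≤ (k:ℝ) := by exact_mod_cast hk4
    nlinarith
  -- conclude in ℕ via reals
  have hchoose : (n.choose k : ℝ) ≤ (n:ℝ)^(k:ℕ) := by exact_mod_cast Nat.choose_le_pow n k
  have hn0 : (0:ℝ) < (n:ℝ) := by positivity
  have hnL : (2:ℝ)^L = (n:ℝ) := Real.rpow_logb (by norm_num) (by norm_num) hn0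
  have hpow : (n:ℝ)^(k:ℕ) = (2:ℝ)^(L * k) := by
    rw [← hnL, ← Real.rpow_natCast ((2:ℝ)^L) k, ← Real.rpow_mul (by norm_num)]
  have hfinal : (n.choose k * 2 : ℝ) < ((2^(k.choose 2) : ℕ) : ℝ) := by
    have e1 : ((2^(k.choose 2) : ℕ) : ℝ) = (2:ℝ)^((k.choose 2 : ℕ) : ℝ) := by
      rw [Real.rpow_natCast]
      push_cast
      ring
    rw [e1]
    have e2 : (n.choose k * 2 : ℝ) ≤ (2:ℝ)^(L * k) * 2 := by
      rw [← hpow]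
      have := hchoose
      nlinarith [hchoose]
    have e3 : (2:ℝ)^(L * k) * 2 = (2:ℝ)^(L * k + 1) := by
      rw [Real.rpow_add (by norm_num)]
      rw [Real.rpow_one]
    have e4 : (2:ℝ)^(L * k + 1) < (2:ℝ)^((k.choose 2 : ℕ) : ℝ) :=
      (Real.rpow_lt_rpow_left_iff (by norm_num)).2 hmain
    linarith
  exact_mod_cast hfinal

end Numerics

/-- Nordhaus–Gaddum lower-type bounds: there are constants `c₁, c₂ > 0` with
`c₁ log n ≤ min_G (Γ_d(G) + Γ_d(Ḡ)) ≤ c₂ (log n)²` for all `n ≥ 2`. -/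
theorem stmt_14 :
    ∃ c₁ c₂ : ℝ, 0 < c₁ ∧ 0 < c₂ ∧ ∀ n : ℕ, 2 ≤ n →
      (∀ G : SimpleGraph (Fin n),
        c₁ * Real.logb 2 n ≤ (GammaD G : ℝ) + (GammaD Gᶜ : ℝ)) ∧
      ∃ G : SimpleGraph (Fin n),
        (GammaD G : ℝ) + (GammaD Gᶜ : ℝ) ≤ c₂ * (Real.logb 2 n) ^ 2 := by
  refine ⟨1/2, 20, by norm_num, by norm_num, fun n hn => ?_⟩
  haveI : Nonempty (Fin n) := ⟨⟨0, by omega⟩⟩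
  set L := Real.logb 2 n with hLdef
  have hL1 : 1 ≤ L := aux_one_le_L hn
  have hn0 : (0:ℝ) < (n:ℝ) := by positivity
  have hnL : (2:ℝ)^L = (n:ℝ) := Real.rpow_logb (by norm_num) (by norm_num) hn0
  constructor
  · -- lower bound
    intro G
    haveI := Classical.decRel G.Adj
    set k := ⌊L/2⌋₊ with hk
    have h2k : 2^(k+k) ≤ Fintype.card (Fin n) := by
      rw [Fintype.card_fin]
      have hkk : ((k:ℝ) + k) ≤ L := by
        have := Nat.floor_le (show (0:ℝ) ≤ L/2 by linarith)
        rw [← hk] at this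
        linarith
      have hr : (2:ℝ)^(((k+k:ℕ)):ℝ) ≤ (2:ℝ)^L := by
        apply (Real.rpow_le_rpow_left_iff (by norm_num)).2
        push_cast
        linarith
      rw [hnL] at hr
      rw [Real.rpow_natCast] at hr
      exact_mod_cast hr
    have halt := aux_ramsey_alpha G k h2k
    have hb1 : alphaNum G ≤ GammaD G := aux_alpha_le_gammaD G
    have hb2 : alphaNum Gᶜ ≤ GammaD Gᶜ := aux_alpha_le_gammaD Gᶜ
    have ha1 : 1 ≤ alphaNum G := aux_one_le_alpha G
    have ha2 : 1 ≤ alphaNum Gᶜ := aux_one_le_alpha Gᶜ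
    have hsum : k + 1 ≤ GammaD G + GammaD Gᶜ := by
      rcases halt with h | h
      · omega
      · omega
    have hkr : L/2 - 1 < (k:ℝ) := by
      have := Nat.sub_one_lt_floor (L/2)
      rw [← hk] at this
      exact this
    have hsumr : ((k:ℝ) + 1) ≤ (GammaD G : ℝ) + (GammaD Gᶜ : ℝ) := by exact_mod_cast hsum
    linarith
  · -- upper bound
    set k := ⌈2*L⌉₊ + 2 with hk
    have hnum := aux_numeric n hn
    rw [← hLdef, ← hk] at hnum
    obtain ⟨G, hG1, hG2⟩ := aux_ramsey_graph (V := Fin n) k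
      (by rw [Fintype.card_fin]; exact hnum)
    refine ⟨G, ?_⟩
    haveI := Classical.decRel G.Adj
    haveI := Classical.decRel Gᶜ.Adj
    have hk2 : 2 ≤ k := by omega
    set a := k - 1 with ha
    have ha1 : 1 ≤ a := by omega
    have hGa : ∀ T : Finset (Fin n), IsIndepFinset G T → T.card ≤ a :=
      fun T hT => by have := hG1 T hT; omega
    have hGca : ∀ T : Finset (Fin n), IsIndepFinset Gᶜ T → T.card ≤ a :=
      fun T hT => by have := hG2 T hT; omega
    have hbound1 := aux_gammaD_le_real G a ha1 hGa
    have hbound2 := aux_gammaD_le_real Gᶜ a ha1 hGca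
    rw [Fintype.card_fin] at hbound1 hbound2
    -- a ≤ 2L + 2
    have har : (a:ℝ) ≤ 2*L + 2 := by
      have hceil : (⌈2*L⌉₊ : ℝ) < 2*L + 1 := Nat.ceil_lt_add_one (by linarith)
      have hkr : (k:ℝ) = (⌈2*L⌉₊ : ℝ) + 2 := by rw [hk]; push_cast; ring
      have har' : (a:ℝ) = (k:ℝ) - 1 := by
        rw [ha, Nat.cast_sub (by omega)]; norm_num
      rw [har', hkr]
      linarith
    -- log n ≤ L
    have hlogn : Real.log n ≤ L := by
      have hlog2pos : 0 < Real.log 2 := Real.log_pos (by norm_num)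
      have heq : L * Real.log 2 = Real.log n := by
        rw [hLdef, ← Real.log_div_log]
        field_simp
      have hlog2lt : Real.log 2 < 1 := by
        have := Real.log_two_lt_d9
        linarith
      nlinarith
    have hlogn0 : 0 ≤ Real.log n := Real.log_nonneg (by exact_mod_cast (by omega : 1 ≤ n))
    have ha0 : (0:ℝ) ≤ (a:ℝ) := by positivity
    have key : ∀ x : ℝ, x ≤ 2*(a:ℝ)*Real.log n + 2 → x ≤ 10 * L^2 := by
      intro x hx
      have h1 : 2*(a:ℝ)*Real.log n ≤ 2*(2*L+2)*L := by nlinarith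
      nlinarith
    have k1 := key _ hbound1
    have k2 := key _ hbound2
    linarith
end

section
/- For every integer r ≥ 1 and n ≥ 2, the directed r-domination number of the complete graph satisfies Γ_{d,r}(K_n) ≤ r·log(n+1), where log is base 2. -/
/-- `S` is a directed `r`-dominating set for the digraph relation `D`. -/
def IsDirRDomSet {V : Type*} (D : V → V → Prop) (r : ℕ) (S : Set V) : Prop :=
  ∀ u, u ∉ S → r ≤ ({v | v ∈ S ∧ D v u} : Set V).ncard

/-- The directed `r`-domination number of a digraph. -/
noncomputable def dirRDomNum (V : Type*) [Fintype V] (D : V → V → Prop) (r : ℕ) : ℕ :=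
  sInf {k | ∃ S : Finset V, IsDirRDomSet D r ↑S ∧ S.card = k}

/-- The directed `r`-domination number of a graph: max over orientations. -/
noncomputable def GammaDr {V : Type*} [Fintype V] (G : SimpleGraph V) (r : ℕ) : ℕ :=
  sSup {k | ∃ D : GraphOrientation G, dirRDomNum V D.rel r = k}


open scoped Classical

lemma tourn_dom {V : Type*} [DecidableEq V] (D : V → V → Prop)
    (A : Finset V) (hA : ∀ u ∈ A, ∀ v ∈ A, u ≠ v → D u v ∨ D v u) :
    ∃ S ⊆ A, (∀ u ∈ A, u ∉ S → ∃ v ∈ S, D v u) ∧ 2 ^ S.card ≤ A.card + 1 := by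
  induction A using Finset.strongInduction with
  | _ A ih =>
    rcases A.eq_empty_or_nonempty with rfl | hne
    · exact ⟨∅, by simp, by simp, by simp⟩
    set f : V → ℕ := fun w => (A.filter (fun v => v ≠ w ∧ D w v)).card with hf
    set g : V → ℕ := fun w => (A.filter (fun v => v ≠ w ∧ D v w)).card with hg
    have hsum : ∑ w ∈ A, f w = ∑ w ∈ A, g w := by
      have h1 : ∀ w, f w = ∑ v ∈ A, (if v ≠ w ∧ D w v then 1 else 0) := by
        intro w; rw [hf]; exact Finset.card_filter _ _
      have h2 : ∀ w, g w = ∑ v ∈ A, (if v ≠ w ∧ D v w then 1 else 0) := by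
        intro w; rw [hg]; exact Finset.card_filter _ _
      simp only [h1, h2]
      rw [Finset.sum_comm]
      apply Finset.sum_congr rfl; intro w _
      apply Finset.sum_congr rfl; intro v _
      congr 1
      simp only [eq_iff_iff]
      constructor
      · rintro ⟨h, h'⟩; exact ⟨Ne.symm h, h'⟩
      · rintro ⟨h, h'⟩; exact ⟨Ne.symm h, h'⟩
    have hcov : ∀ w ∈ A, A.card - 1 ≤ f w + g w := by
      intro w hw
      have hsub : A.erase w ⊆ (A.filter (fun v => v ≠ w ∧ D w v)) ∪
          (A.filter (fun v => v ≠ w ∧ D v w)) := by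
        intro v hv
        rw [Finset.mem_erase] at hv
        rcases hA w hw v hv.2 (Ne.symm hv.1) with h | h
        · exact Finset.mem_union_left _ (Finset.mem_filter.2 ⟨hv.2, hv.1, h⟩)
        · exact Finset.mem_union_right _ (Finset.mem_filter.2 ⟨hv.2, hv.1, h⟩)
      calc A.card - 1 = (A.erase w).card := (Finset.card_erase_of_mem hw).symm
        _ ≤ _ := Finset.card_le_card hsub
        _ ≤ f w + g w := Finset.card_union_le _ _
    obtain ⟨w, hw, hwdeg⟩ : ∃ w ∈ A, A.card - 1 ≤ 2 * f w := by
      apply Finset.exists_le_of_sum_le hne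
      calc ∑ w ∈ A, (A.card - 1) ≤ ∑ w ∈ A, (f w + g w) := Finset.sum_le_sum hcov
        _ = ∑ w ∈ A, f w + ∑ w ∈ A, g w := Finset.sum_add_distrib
        _ = ∑ w ∈ A, 2 * f w := by
            rw [← hsum, ← Finset.sum_add_distrib]
            exact Finset.sum_congr rfl fun w _ => (two_mul _).symm
    set Out : Finset V := A.filter (fun v => v ≠ w ∧ D w v) with hOut
    set B : Finset V := A \ insert w Out with hB
    have hwOut : w ∉ Out := by simp [hOut]
    have hOutA : Out ⊆ A := Finset.filter_subset _ _
    have hiwA : insert w Out ⊆ A := Finset.insert_subset hw hOutA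
    have hBA : B ⊆ A := Finset.sdiff_subset
    have hOcard : Out.card = f w := rfl
    have hins : (insert w Out).card = f w + 1 := by
      rw [Finset.card_insert_of_notMem hwOut, hOcard]
    have hBcard : B.card = A.card - (f w + 1) := by
      rw [hB, Finset.card_sdiff_of_subset hiwA, hins]
    have hinsle : f w + 1 ≤ A.card := hins ▸ Finset.card_le_card hiwA
    have hBlt : B ⊂ A := by
      refine Finset.ssubset_iff_of_subset hBA |>.2 ⟨w, hw, ?_⟩
      simp [hB]
    obtain ⟨S', hS'B, hS'dom, hS'card⟩ := ih B hBlt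
      (fun u hu v hv huv => hA u (hBA hu) v (hBA hv) huv)
    refine ⟨insert w S', Finset.insert_subset hw (hS'B.trans hBA), ?_, ?_⟩
    · intro u hu huS
      have huw : u ≠ w := fun h => huS (h ▸ Finset.mem_insert_self w S')
      have huS' : u ∉ S' := fun h => huS (Finset.mem_insert_of_mem h)
      by_cases hub : u ∈ B
      · obtain ⟨v, hv, hDv⟩ := hS'dom u hub huS'
        exact ⟨v, Finset.mem_insert_of_mem hv, hDv⟩
      · have : u ∈ insert w Out := by
          by_contra h
          exact hub (Finset.mem_sdiff.2 ⟨hu, h⟩)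
        rcases Finset.mem_insert.1 this with h | h
        · exact absurd h huw
        · exact ⟨w, Finset.mem_insert_self _ _, (Finset.mem_filter.1 h).2.2⟩
    · have hwS' : w ∉ S' := fun h => by
        have := hS'B h
        simp [hB] at this
      rw [Finset.card_insert_of_notMem hwS', pow_succ]
      have hm : 1 ≤ A.card := hne.card_pos
      have h2 : 2 * (B.card + 1) ≤ A.card + 1 := by
        rw [hBcard]; omega
      calc 2 ^ S'.card * 2 ≤ (B.card + 1) * 2 := Nat.mul_le_mul_right 2 hS'card
        _ ≤ A.card + 1 := by omega

lemma tourn_rdom {V : Type*} [DecidableEq V] (D : V → V → Prop) (r : ℕ)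
    (A : Finset V) (hA : ∀ u ∈ A, ∀ v ∈ A, u ≠ v → D u v ∨ D v u) :
    ∃ S ⊆ A, (∀ u ∈ A, u ∉ S → r ≤ (S.filter (fun v => D v u)).card) ∧
      2 ^ S.card ≤ (A.card + 1) ^ r := by
  induction r generalizing A with
  | zero => exact ⟨∅, by simp, by simp, by simp⟩
  | succ r ihr =>
    obtain ⟨S₁, hS₁A, hS₁dom, hS₁card⟩ := tourn_dom D A hA
    obtain ⟨S', hS'B, hS'dom, hS'card⟩ := ihr (A \ S₁)
      (fun u hu v hv huv => hA u (Finset.sdiff_subset hu) v (Finset.sdiff_subset hv) huv)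
    have hdisj : Disjoint S₁ S' := by
      refine Finset.disjoint_left.2 fun v hv hv' => ?_
      exact (Finset.mem_sdiff.1 (hS'B hv')).2 hv
    refine ⟨S₁ ∪ S', Finset.union_subset hS₁A (hS'B.trans Finset.sdiff_subset), ?_, ?_⟩
    · intro u hu huS
      have huS₁ : u ∉ S₁ := fun h => huS (Finset.mem_union_left _ h)
      have huS' : u ∉ S' := fun h => huS (Finset.mem_union_right _ h)
      have huB : u ∈ A \ S₁ := Finset.mem_sdiff.2 ⟨hu, huS₁⟩
      obtain ⟨w, hwS₁, hw⟩ := hS₁dom u hu huS₁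
      have hr' := hS'dom u huB huS'
      have hwnot : w ∉ S'.filter (fun v => D v u) := by
        intro h
        exact (Finset.disjoint_left.1 hdisj hwS₁) (Finset.mem_filter.1 h).1
      have hsub : insert w (S'.filter (fun v => D v u)) ⊆
          (S₁ ∪ S').filter (fun v => D v u) := by
        intro v hv
        rcases Finset.mem_insert.1 hv with rfl | hv
        · exact Finset.mem_filter.2 ⟨Finset.mem_union_left _ hwS₁, hw⟩
        · have := Finset.mem_filter.1 hv
          exact Finset.mem_filter.2 ⟨Finset.mem_union_right _ this.1, this.2⟩
      calc r + 1 ≤ (S'.filter (fun v => D v u)).card + 1 := by omega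
        _ = (insert w (S'.filter (fun v => D v u))).card :=
            (Finset.card_insert_of_notMem hwnot).symm
        _ ≤ _ := Finset.card_le_card hsub
    · rw [Finset.card_union_of_disjoint hdisj, pow_add]
      have hBle : (A \ S₁).card + 1 ≤ A.card + 1 := by
        have := Finset.card_le_card (Finset.sdiff_subset (s := A) (t := S₁))
        omega
      calc 2 ^ S₁.card * 2 ^ S'.card ≤ (A.card + 1) * ((A \ S₁).card + 1) ^ r :=
            Nat.mul_le_mul hS₁card hS'card
        _ ≤ (A.card + 1) * (A.card + 1) ^ r :=
            Nat.mul_le_mul_left _ (Nat.pow_le_pow_left hBle r)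
        _ = (A.card + 1) ^ (r + 1) := by ring

/-- `Γ_{d,r}(K_n) ≤ r log(n+1)` (log base 2). -/
theorem stmt_16 (r n : ℕ) (hr : 1 ≤ r) (hn : 2 ≤ n) :
    (GammaDr (⊤ : SimpleGraph (Fin n)) r : ℝ) ≤ (r : ℝ) * Real.logb 2 (n + 1) := by
  have hlog0 : (0:ℝ) ≤ (r : ℝ) * Real.logb 2 (n + 1) := by
    apply mul_nonneg (by positivity)
    apply Real.logb_nonneg (by norm_num)
    have : (1:ℝ) ≤ (n:ℝ) := by exact_mod_cast Nat.one_le_of_lt hn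
    linarith
  set N : ℕ := ⌊(r : ℝ) * Real.logb 2 (n + 1)⌋₊ with hN
  have hkey : ∀ k ∈ {k | ∃ D : GraphOrientation (⊤ : SimpleGraph (Fin n)),
      dirRDomNum (Fin n) D.rel r = k}, k ≤ N := by
    rintro k ⟨D, rfl⟩
    have hA : ∀ u ∈ (Finset.univ : Finset (Fin n)), ∀ v ∈ (Finset.univ : Finset (Fin n)),
        u ≠ v → D.rel u v ∨ D.rel v u := by
      intro u _ v _ huv
      exact D.rel_of_adj u v ((SimpleGraph.top_adj u v).2 huv)
    obtain ⟨S, _, hSdom, hScard⟩ := tourn_rdom D.rel r Finset.univ hA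
    have hdom : IsDirRDomSet D.rel r ↑S := by
      intro u hu
      have heq : ({v | v ∈ (↑S : Set (Fin n)) ∧ D.rel v u} : Set (Fin n)) =
          ↑(S.filter (fun v => D.rel v u)) := by
        ext v; simp [Finset.mem_filter]
      rw [heq, Set.ncard_coe_finset]
      exact hSdom u (Finset.mem_univ u) (fun h => hu (Finset.mem_coe.2 h))
    have hle : dirRDomNum (Fin n) D.rel r ≤ S.card :=
      Nat.sInf_le ⟨S, hdom, rfl⟩
    have h2 : 2 ^ dirRDomNum (Fin n) D.rel r ≤ (n + 1) ^ r := by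
      calc 2 ^ dirRDomNum (Fin n) D.rel r ≤ 2 ^ S.card :=
            Nat.pow_le_pow_right (by norm_num) hle
        _ ≤ (Finset.univ.card + 1) ^ r := hScard
        _ = (n + 1) ^ r := by rw [Finset.card_univ, Fintype.card_fin]
    apply Nat.le_floor
    set k := dirRDomNum (Fin n) D.rel r
    have h2R : (2:ℝ) ^ k ≤ ((n:ℝ) + 1) ^ r := by exact_mod_cast h2
    have := Real.logb_le_logb_of_le (b := 2) (by norm_num) (by positivity) h2R
    rw [Real.logb_pow, Real.logb_pow, Real.logb_self_eq_one (b := 2) (by norm_num)] at this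
    simpa using this
  calc (GammaDr (⊤ : SimpleGraph (Fin n)) r : ℝ) ≤ (N : ℝ) := by
        exact_mod_cast Nat.cast_le.2 (csSup_le' hkey)
    _ ≤ (r : ℝ) * Real.logb 2 (n + 1) := Nat.floor_le hlog0
end
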